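/- arXiv:2411.00735 — 10 statements merged into one kernel-verified Lean document; each statement's English description precedes it below -/
import Mathlib

section
/- Let β ≥ 0 and δ, σ > 0 satisfy δ > (1 − 4β)e^{−2} (this holds in particular whenever β ≥ 1/4). Then there is exactly one y > 0 with σ − δy = y·e^{−y/(1+βy)}; i.e., the equilibrium of the CSTR model is unique. -/
/-!
Writing the equation as `g y = σ` with `g y = δ y + y e^{-y/(1+βy)}`, it suffices that `g` is
strictly increasing on `[0, ∞)`, since `g 0 = 0 < σ ≤ g (σ/δ)`. In terms of `t = y/(1+βy)` one
has `g' y = δ + e^{-t}(1 - t + βt²)`. For `β > 1/4` the quadratic has no real root; otherwise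
`1 - t + βt² ≥ (1 - 4β)(1 - t)` and `(1 - t)e^{-t} ≥ -e^{-2}` (its minimum, at `t = 2`), so
`g' y ≥ δ - (1 - 4β)e^{-2} > 0`.
-/

open Real Set

lemma neg_exp_neg_two_le_one_sub_mul_exp_neg (t : ℝ) : -exp (-2) ≤ (1 - t) * exp (-t) := by
  have hshift : t - 1 ≤ exp (t - 2) := by linarith [add_one_le_exp (t - 2)]
  have hprod : exp (t - 2) * exp (-t) = exp (-2) := by rw [← exp_add]; ring_nf
  linarith [mul_le_mul_of_nonneg_right hshift (exp_pos (-t)).le]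

lemma exp_neg_mul_quadratic_add_pos (β δ t : ℝ) (hβ : 0 ≤ β) (hδ : 0 < δ)
    (h : δ > (1 - 4 * β) * exp (-2)) :
    0 < δ + exp (-t) * (1 - t + β * t ^ 2) := by
  rcases le_or_gt β (1 / 4) with hβ4 | hβ4
  · have hquad : (1 - 4 * β) * (1 - t) ≤ 1 - t + β * t ^ 2 := by
      nlinarith [mul_nonneg hβ (sq_nonneg (t - 2))]
    calc 0 < δ + (1 - 4 * β) * -exp (-2) := by linarith
      _ ≤ δ + (1 - 4 * β) * ((1 - t) * exp (-t)) := by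
        gcongr
        · linarith
        · exact neg_exp_neg_two_le_one_sub_mul_exp_neg t
      _ ≤ δ + exp (-t) * (1 - t + β * t ^ 2) := by
        linarith [mul_le_mul_of_nonneg_left hquad (exp_pos (-t)).le]
  · have hquad : 0 < 1 - t + β * t ^ 2 := by nlinarith [sq_nonneg (2 * β * t - 1)]
    have := mul_pos (exp_pos (-t)) hquad
    linarith

noncomputable def cstrMap (β δ y : ℝ) : ℝ := δ * y + y * exp (-(y / (1 + β * y)))

lemma hasDerivAt_cstrMap (β δ y : ℝ) (hy : 1 + β * y ≠ 0) :
    HasDerivAt (cstrMap β δ)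
      (δ + exp (-(y / (1 + β * y))) *
        (1 - y / (1 + β * y) + β * (y / (1 + β * y)) ^ 2)) y := by
  have hquot : HasDerivAt (fun y => y / (1 + β * y)) (1 / (1 + β * y) ^ 2) y := by
    refine ((hasDerivAt_id' y).div
      ((hasDerivAt_id' y).const_mul β |>.const_add 1) hy).congr_deriv ?_
    field_simp
    ring
  have hsubst : y / (1 + β * y) - β * (y / (1 + β * y)) ^ 2 = y / (1 + β * y) ^ 2 := by
    field_simp
    ring
  refine (((hasDerivAt_id' y).const_mul δ).add
    ((hasDerivAt_id' y).mul hquot.neg.exp)).congr_deriv ?_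
  simp only [Pi.neg_apply]
  linear_combination exp (-(y / (1 + β * y))) * hsubst

lemma one_add_mul_ne_zero_of_nonneg {β y : ℝ} (hβ : 0 ≤ β) (hy : 0 ≤ y) : 1 + β * y ≠ 0 := by
  positivity

lemma continuousOn_cstrMap (β δ : ℝ) (hβ : 0 ≤ β) : ContinuousOn (cstrMap β δ) (Ici 0) :=
  fun y hy => (hasDerivAt_cstrMap β δ y
    (one_add_mul_ne_zero_of_nonneg hβ hy)).continuousAt.continuousWithinAt

lemma strictMonoOn_cstrMap (β δ : ℝ) (hβ : 0 ≤ β) (hδ : 0 < δ)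
    (h : δ > (1 - 4 * β) * exp (-2)) :
    StrictMonoOn (cstrMap β δ) (Ici 0) := by
  refine strictMonoOn_of_deriv_pos (convex_Ici 0) (continuousOn_cstrMap β δ hβ) fun y hy => ?_
  rw [interior_Ici] at hy
  rw [(hasDerivAt_cstrMap β δ y
    (one_add_mul_ne_zero_of_nonneg hβ (Ioi_subset_Ici_self hy))).deriv]
  exact exp_neg_mul_quadratic_add_pos β δ _ hβ hδ h

/-- If `β ≥ 0`, `δ, σ > 0` and `δ > (1 − 4β)e^{−2}`, then there is exactly one
`y > 0` with `σ − δy = y·exp(−y/(1+βy))`, i.e., the CSTR equilibrium is unique. -/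
theorem stmt_2 (β δ σ : ℝ) (hβ : 0 ≤ β) (hδ : 0 < δ) (hσ : 0 < σ)
    (h : δ > (1 - 4 * β) * Real.exp (-2)) :
    ∃! y : ℝ, 0 < y ∧ σ - δ * y = y * Real.exp (-(y / (1 + β * y))) := by
  have hequation : ∀ y, σ - δ * y = y * exp (-(y / (1 + β * y))) ↔ cstrMap β δ y = σ :=
    fun y => by unfold cstrMap; constructor <;> intro <;> linarith
  have hzero : cstrMap β δ 0 = 0 := by simp [cstrMap]
  have hbound : σ ≤ cstrMap β δ (σ / δ) := by
    have : 0 ≤ σ / δ * exp (-(σ / δ / (1 + β * (σ / δ)))) := by positivity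
    rw [cstrMap, mul_div_cancel₀ σ hδ.ne']
    linarith
  obtain ⟨y, hy, hgy⟩ := intermediate_value_Icc (by positivity : (0 : ℝ) ≤ σ / δ)
    ((continuousOn_cstrMap β δ hβ).mono Icc_subset_Ici_self) ⟨hzero.trans_le hσ.le, hbound⟩
  have hypos : 0 < y := hy.1.lt_of_ne fun h0 => by rw [← h0, hzero] at hgy; exact hσ.ne hgy
  refine ⟨y, ⟨hypos, (hequation y).2 hgy⟩, fun z ⟨hzpos, hz⟩ => ?_⟩
  exact (strictMonoOn_cstrMap β δ hβ hδ h).injOn hzpos.le hypos.le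
    (((hequation z).1 hz).trans hgy.symm)
end

section
/- Let 0 < δ < e^{−2}. Then the equation (y − 1)e^{−y} = δ has exactly two positive solutions y₁ < y₂, satisfying 1 < y₁ < 2 < y₂; and for σ > 0 the equation σ = δy + y·e^{−y} has exactly three positive solutions y if and only if σ lies strictly between the two values y₂²e^{−y₂} and y₁²e^{−y₁}. -/
/-!
Write `f_δ y = δ y + y e^{-y}` and `g y = (y - 1) e^{-y}`, so that `f_δ' = δ - g`. Since
`g' = (2 - y) e^{-y}`, `g` increases up to its maximum `g 2 = e^{-2}` and then decreases to `0`;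
hence for `0 < δ < e^{-2}` the equation `g = δ` has one root `y₁ < 2` and one root `y₂ > 2`. Thus
`f_δ` is N-shaped on `[0, ∞)`: it rises from `f_δ 0 = 0` to `f_δ y₁`, falls to `f_δ y₂` and then
rises to `∞`, and a level `σ > 0` is attained three times iff `f_δ y₂ < σ < f_δ y₁`. At a root
of `g = δ` one has `f_δ y = y (g y + e^{-y}) = y² e^{-y}`.
-/

open Real Set Filter Topology

lemma encard_inter_preimage_singleton_le_one {α β : Type*} {f : α → β} {s : Set α}
    (hf : InjOn f s) (c : β) : (s ∩ f ⁻¹' {c}).encard ≤ 1 :=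
  encard_le_one_iff.2 fun _ _ hx hy => hf hx.1 hy.1 (hx.2.trans hy.2.symm)

lemma setOf_lt_and_eq_subset_union {f : ℝ → ℝ} {l a b σ : ℝ} :
    {y | l < y ∧ f y = σ} ⊆
      (Icc l a ∩ f ⁻¹' {σ}) ∪ (Ioo a b ∩ f ⁻¹' {σ}) ∪ (Ici b ∩ f ⁻¹' {σ}) := by
  rintro y ⟨hly, hy⟩
  rcases le_or_gt y a with hya | hay
  · exact Or.inl (Or.inl ⟨⟨hly.le, hya⟩, hy⟩)
  rcases lt_or_ge y b with hyb | hby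
  · exact Or.inl (Or.inr ⟨⟨hay, hyb⟩, hy⟩)
  · exact Or.inr ⟨hby, hy⟩

/- Each of the three monotone pieces meets the level set at most once, and the middle one meets
it exactly when `f b < σ < f a`. -/
theorem encard_setOf_eq_eq_three_iff {f : ℝ → ℝ} {l a b σ : ℝ} (hf : ContinuousOn f (Ici l))
    (hla : l < a) (hab : a < b) (hmono : StrictMonoOn f (Icc l a))
    (hanti : StrictAntiOn f (Icc a b)) (hmono' : StrictMonoOn f (Ici b))
    (htop : Tendsto f atTop atTop) (hσ : f l < σ) :
    {y | l < y ∧ f y = σ}.encard = 3 ↔ f b < σ ∧ σ < f a := by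
  set S := {y | l < y ∧ f y = σ}
  have hcover : S ⊆ _ := setOf_lt_and_eq_subset_union (a := a) (b := b)
  have h₁ := encard_inter_preimage_singleton_le_one hmono.injOn σ
  have h₂ := encard_inter_preimage_singleton_le_one (hanti.injOn.mono Ioo_subset_Icc_self) σ
  have h₃ := encard_inter_preimage_singleton_le_one hmono'.injOn σ
  constructor
  · intro hS
    obtain ⟨y, ⟨hay, hyb⟩, hy⟩ : (Ioo a b ∩ f ⁻¹' {σ}).Nonempty := by
      rw [nonempty_iff_ne_empty]
      intro hempty
      rw [hempty, union_empty] at hcover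
      have : S.encard ≤ 2 := calc
        S.encard ≤ _ := encard_le_encard hcover
        _ ≤ _ := encard_union_le _ _
        _ ≤ 1 + 1 := add_le_add h₁ h₃
        _ = 2 := by norm_num
      rw [hS] at this
      norm_num at this
    rw [mem_preimage, mem_singleton_iff] at hy
    rw [← hy]
    exact ⟨hanti ⟨hay.le, hyb.le⟩ ⟨hab.le, le_rfl⟩ hyb, hanti ⟨le_rfl, hab.le⟩ ⟨hay.le, hyb.le⟩ hay⟩
  · rintro ⟨hbσ, hσa⟩
    obtain ⟨p, ⟨hlp, hpa⟩, hp⟩ := intermediate_value_Ioo hla.le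
      (hf.mono Icc_subset_Ici_self) ⟨hσ, hσa⟩
    obtain ⟨q, ⟨haq, hqb⟩, hq⟩ := intermediate_value_Ioo' hab.le
      (hf.mono (Icc_subset_Ici_iff hab.le |>.2 hla.le)) ⟨hbσ, hσa⟩
    obtain ⟨Y, hσY, hbY⟩ := ((htop.eventually_gt_atTop σ).and (eventually_ge_atTop b)).exists
    obtain ⟨r, ⟨hbr, -⟩, hr⟩ := intermediate_value_Ioo hbY
      (hf.mono (Icc_subset_Ici_iff hbY |>.2 (hla.trans hab).le)) ⟨hbσ, hσY⟩
    have hpqr : ({p, q, r} : Set ℝ) ⊆ S := by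
      rintro y (rfl | rfl | rfl)
      exacts [⟨hlp, hp⟩, ⟨hla.trans haq, hq⟩, ⟨(hla.trans hab).trans hbr, hr⟩]
    apply le_antisymm
    · calc S.encard ≤ _ := encard_le_encard hcover
        _ ≤ _ := encard_union_le _ _
        _ ≤ _ := add_le_add (encard_union_le _ _) le_rfl
        _ ≤ 1 + 1 + 1 := add_le_add (add_le_add h₁ h₂) h₃
        _ = 3 := by norm_num
    · rw [← encard_eq_three.2 ⟨p, q, r, (hpa.trans haq).ne, (hpa.trans (hab.trans hbr)).ne,
        (hqb.trans hbr).ne, rfl⟩]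
      exact encard_le_encard hpqr

noncomputable def criticalDelta (y : ℝ) : ℝ := (y - 1) * exp (-y)

noncomputable def equilibriumFun (δ y : ℝ) : ℝ := δ * y + y * exp (-y)

lemma hasDerivAt_criticalDelta (y : ℝ) :
    HasDerivAt criticalDelta ((2 - y) * exp (-y)) y := by
  have h : HasDerivAt (fun y => (y - 1) * exp (-y)) (1 * exp (-y) + (y - 1) * (exp (-y) * -1)) y :=
    ((hasDerivAt_id' y).sub_const 1).mul (hasDerivAt_id' y).neg.exp
  exact h.congr_deriv (by ring)

lemma hasDerivAt_equilibriumFun (δ y : ℝ) :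
    HasDerivAt (equilibriumFun δ) (δ - criticalDelta y) y := by
  have h : HasDerivAt (fun y => δ * y + y * exp (-y))
      (δ * 1 + (1 * exp (-y) + y * (exp (-y) * -1))) y :=
    ((hasDerivAt_id' y).const_mul δ).add ((hasDerivAt_id' y).mul (hasDerivAt_id' y).neg.exp)
  exact h.congr_deriv (by rw [criticalDelta]; ring)

lemma continuous_criticalDelta : Continuous criticalDelta := by
  unfold criticalDelta; fun_prop

lemma continuous_equilibriumFun (δ : ℝ) : Continuous (equilibriumFun δ) := by
  unfold equilibriumFun; fun_prop

lemma strictMonoOn_criticalDelta : StrictMonoOn criticalDelta (Iic 2) := by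
  refine strictMonoOn_of_deriv_pos (convex_Iic 2) continuous_criticalDelta.continuousOn
    fun x hx => ?_
  rw [interior_Iic, mem_Iio] at hx
  rw [(hasDerivAt_criticalDelta x).deriv]
  exact mul_pos (by linarith) (exp_pos _)

lemma strictAntiOn_criticalDelta : StrictAntiOn criticalDelta (Ici 2) := by
  refine strictAntiOn_of_deriv_neg (convex_Ici 2) continuous_criticalDelta.continuousOn
    fun x hx => ?_
  rw [interior_Ici, mem_Ioi] at hx
  rw [(hasDerivAt_criticalDelta x).deriv]
  exact mul_neg_of_neg_of_pos (by linarith) (exp_pos _)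

lemma tendsto_criticalDelta_atTop : Tendsto criticalDelta atTop (𝓝 0) := by
  have h := (tendsto_pow_mul_exp_neg_atTop_nhds_zero 1).sub tendsto_exp_neg_atTop_nhds_zero
  rw [sub_zero] at h
  refine h.congr fun y => ?_
  simp only [criticalDelta, pow_one]
  ring

lemma exists_criticalDelta_eq {δ : ℝ} (hδ0 : 0 < δ) (hδ : δ < exp (-2)) :
    ∃ y₁ y₂, 1 < y₁ ∧ y₁ < 2 ∧ 2 < y₂ ∧ criticalDelta y₁ = δ ∧ criticalDelta y₂ = δ := by
  have h2 : criticalDelta 2 = exp (-2) := by norm_num [criticalDelta]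
  obtain ⟨y₁, ⟨h1y₁, hy₁2⟩, hy₁⟩ := intermediate_value_Ioo (by norm_num : (1 : ℝ) ≤ 2)
    continuous_criticalDelta.continuousOn
    (show δ ∈ Ioo (criticalDelta 1) (criticalDelta 2) by rw [h2]; simp [criticalDelta, hδ0, hδ])
  obtain ⟨Y, hYδ, h2Y⟩ :=
    ((tendsto_criticalDelta_atTop.eventually (gt_mem_nhds hδ0)).and (eventually_ge_atTop 2)).exists
  obtain ⟨y₂, ⟨h2y₂, -⟩, hy₂⟩ := intermediate_value_Ioo' h2Y
    continuous_criticalDelta.continuousOn (by rw [h2]; exact ⟨hYδ, hδ⟩)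
  exact ⟨y₁, y₂, h1y₁, hy₁2, h2y₂, hy₁, hy₂⟩

lemma criticalDelta_eq_iff {δ y₁ y₂ y : ℝ} (hy₁2 : y₁ ≤ 2) (h2y₂ : 2 ≤ y₂)
    (hy₁ : criticalDelta y₁ = δ) (hy₂ : criticalDelta y₂ = δ) :
    criticalDelta y = δ ↔ y = y₁ ∨ y = y₂ := by
  constructor
  · intro hy
    rcases le_total y 2 with hy2 | h2y
    · exact Or.inl (strictMonoOn_criticalDelta.injOn hy2 hy₁2 (hy.trans hy₁.symm))
    · exact Or.inr (strictAntiOn_criticalDelta.injOn h2y h2y₂ (hy.trans hy₂.symm))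
  · rintro (rfl | rfl) <;> assumption

lemma strictMonoOn_equilibriumFun_Iic {δ y₁ : ℝ} (hy₁2 : y₁ ≤ 2) (hy₁ : criticalDelta y₁ = δ) :
    StrictMonoOn (equilibriumFun δ) (Iic y₁) := by
  refine strictMonoOn_of_deriv_pos (convex_Iic y₁) (continuous_equilibriumFun δ).continuousOn
    fun x hx => ?_
  rw [interior_Iic, mem_Iio] at hx
  rw [(hasDerivAt_equilibriumFun δ x).deriv, sub_pos, ← hy₁]
  exact strictMonoOn_criticalDelta (hx.le.trans hy₁2) hy₁2 hx

lemma strictAntiOn_equilibriumFun_Icc {δ y₁ y₂ : ℝ} (hy₁2 : y₁ ≤ 2) (h2y₂ : 2 ≤ y₂)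
    (hy₁ : criticalDelta y₁ = δ) (hy₂ : criticalDelta y₂ = δ) :
    StrictAntiOn (equilibriumFun δ) (Icc y₁ y₂) := by
  refine strictAntiOn_of_deriv_neg (convex_Icc y₁ y₂) (continuous_equilibriumFun δ).continuousOn
    fun x hx => ?_
  rw [interior_Icc, mem_Ioo] at hx
  rw [(hasDerivAt_equilibriumFun δ x).deriv, sub_neg]
  rcases le_total x 2 with hx2 | h2x
  · exact hy₁ ▸ strictMonoOn_criticalDelta hy₁2 hx2 hx.1
  · exact hy₂ ▸ strictAntiOn_criticalDelta h2x h2y₂ hx.2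

lemma strictMonoOn_equilibriumFun_Ici {δ y₂ : ℝ} (h2y₂ : 2 ≤ y₂) (hy₂ : criticalDelta y₂ = δ) :
    StrictMonoOn (equilibriumFun δ) (Ici y₂) := by
  refine strictMonoOn_of_deriv_pos (convex_Ici y₂) (continuous_equilibriumFun δ).continuousOn
    fun x hx => ?_
  rw [interior_Ici, mem_Ioi] at hx
  rw [(hasDerivAt_equilibriumFun δ x).deriv, sub_pos, ← hy₂]
  exact strictAntiOn_criticalDelta h2y₂ (h2y₂.trans hx.le) hx

lemma equilibriumFun_of_criticalDelta_eq {δ y : ℝ} (hy : criticalDelta y = δ) :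
    equilibriumFun δ y = y ^ 2 * exp (-y) := by
  rw [equilibriumFun, ← hy, criticalDelta]
  ring

lemma tendsto_equilibriumFun_atTop {δ : ℝ} (hδ : 0 < δ) :
    Tendsto (equilibriumFun δ) atTop atTop := by
  refine tendsto_atTop_mono' atTop ?_ (tendsto_id.const_mul_atTop hδ)
  filter_upwards [eventually_ge_atTop 0] with y hy
  exact le_add_of_nonneg_right (mul_nonneg hy (exp_pos _).le)

/-- For `0 < δ < e^{−2}`, the equation `(y − 1)e^{−y} = δ` has exactly two
positive solutions `y₁ < y₂` with `1 < y₁ < 2 < y₂`, and for `σ > 0` the equation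
`σ = δy + y·e^{−y}` has exactly three positive solutions iff
`y₂²e^{−y₂} < σ < y₁²e^{−y₁}`. -/
theorem stmt_3 (δ : ℝ) (hδ0 : 0 < δ) (hδ : δ < Real.exp (-2)) :
    ∃ y₁ y₂ : ℝ, y₁ < y₂ ∧ 1 < y₁ ∧ y₁ < 2 ∧ 2 < y₂ ∧
      {y : ℝ | 0 < y ∧ (y - 1) * Real.exp (-y) = δ} = {y₁, y₂} ∧
      ∀ σ : ℝ, 0 < σ →
        ({y : ℝ | 0 < y ∧ σ = δ * y + y * Real.exp (-y)}.encard = 3 ↔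
          y₂ ^ 2 * Real.exp (-y₂) < σ ∧ σ < y₁ ^ 2 * Real.exp (-y₁)) := by
  obtain ⟨y₁, y₂, h1y₁, hy₁2, h2y₂, hy₁, hy₂⟩ := exists_criticalDelta_eq hδ0 hδ
  refine ⟨y₁, y₂, hy₁2.trans h2y₂, h1y₁, hy₁2, h2y₂, ?_, fun σ hσ => ?_⟩
  · ext y
    change 0 < y ∧ criticalDelta y = δ ↔ y ∈ ({y₁, y₂} : Set ℝ)
    rw [criticalDelta_eq_iff hy₁2.le h2y₂.le hy₁ hy₂]
    refine ⟨And.right, fun hy => ⟨?_, hy⟩⟩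
    rcases hy with rfl | rfl <;> linarith
  · have key := encard_setOf_eq_eq_three_iff (l := 0) (σ := σ)
      (continuous_equilibriumFun δ).continuousOn (by linarith : (0 : ℝ) < y₁) (hy₁2.trans h2y₂)
      ((strictMonoOn_equilibriumFun_Iic hy₁2.le hy₁).mono Icc_subset_Iic_self)
      (strictAntiOn_equilibriumFun_Icc hy₁2.le h2y₂.le hy₁ hy₂)
      (strictMonoOn_equilibriumFun_Ici h2y₂.le hy₂) (tendsto_equilibriumFun_atTop hδ0)
      (by simpa [equilibriumFun] using hσ)
    rw [equilibriumFun_of_criticalDelta_eq hy₁, equilibriumFun_of_criticalDelta_eq hy₂] at key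
    convert key using 5
    rw [equilibriumFun, eq_comm]
end

section
/- Let y > 1 and γ > 0, and set δ = (y − 1)e^{−y}, σ = y²e^{−y}, x = (y − 1)/y. Then (x, y) is an equilibrium of the CSTR model with β = 0 (i.e., x = δy/σ and σ − δy = y·e^{−y}), it satisfies y = 1/(1 − x), and the Jacobian matrix J at this equilibrium is singular: det J = 0. -/
open Real

/-- The Jacobian of the CSTR model with `β = 0` at the equilibrium with coordinates `(x, y)`. -/
noncomputable def cstrJacobian (γ x y : ℝ) : Matrix (Fin 2) (Fin 2) ℝ :=
  !![-exp y / x, exp y * (1 - x);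
     -exp y / γ, -exp y * (1 - x) * (1 - y) / (γ * y)]

theorem cstrJacobian_det {γ x y : ℝ} (hx : x ≠ 0) (hy : y ≠ 0) :
    (cstrJacobian γ x y).det = exp y ^ 2 * (1 - x) * (x * y + 1 - y) / (γ * x * y) := by
  rw [cstrJacobian, Matrix.det_fin_two_of]
  rcases eq_or_ne γ 0 with rfl | hγ
  · simp
  · field_simp
    ring

theorem cstrJacobian_det_eq_zero {γ x y : ℝ} (hx : x ≠ 0) (hxy : x * y = y - 1) :
    (cstrJacobian γ x y).det = 0 := by
  have hy : y ≠ 0 := by rintro rfl; linarith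
  rw [cstrJacobian_det hx hy, hxy]
  ring

theorem stmt_4_general (y γ : ℝ) (hy : 1 < y) :
    let δ := (y - 1) * Real.exp (-y)
    let σ := y ^ 2 * Real.exp (-y)
    let x := (y - 1) / y
    let J : Matrix (Fin 2) (Fin 2) ℝ :=
      !![-Real.exp y / x, Real.exp y * (1 - x);
         -Real.exp y / γ, -Real.exp y * (1 - x) * (1 - y) / (γ * y)]
    x = δ * y / σ ∧ σ - δ * y = y * Real.exp (-y) ∧ y = 1 / (1 - x) ∧ J.det = 0 := by
  intro δ σ x J
  have hy0 : y ≠ 0 := by positivity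
  have hx0 : x ≠ 0 := div_ne_zero (by linarith) hy0
  have hxy : x * y = y - 1 := div_mul_cancel₀ _ hy0
  refine ⟨?_, by ring, ?_, cstrJacobian_det_eq_zero hx0 hxy⟩
  · simp only [x, δ, σ]
    field_simp
  · simp only [x]
    field_simp
    ring

/-- For `y > 1`, `γ > 0`, with `δ = (y−1)e^{−y}`, `σ = y²e^{−y}`,
`x = (y−1)/y`, the pair `(x, y)` is an equilibrium of the CSTR model with `β = 0`,
satisfies `y = 1/(1−x)`, and the Jacobian `J` there is singular. -/
theorem stmt_4 (y γ : ℝ) (hy : 1 < y) (hγ : 0 < γ) :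
    let δ := (y - 1) * Real.exp (-y)
    let σ := y ^ 2 * Real.exp (-y)
    let x := (y - 1) / y
    let J : Matrix (Fin 2) (Fin 2) ℝ :=
      !![-Real.exp y / x, Real.exp y * (1 - x);
         -Real.exp y / γ, -Real.exp y * (1 - x) * (1 - y) / (γ * y)]
    x = δ * y / σ ∧ σ - δ * y = y * Real.exp (-y) ∧ y = 1 / (1 - x) ∧ J.det = 0 :=
  stmt_4_general y γ hy
end

section
/- Let 0 < x < 1, y > 0, γ > 0, and let J be the Jacobian matrix of the CSTR model (β = 0) at the equilibrium parameterized by (x, y). Then: (a) trace J = 0 if and only if y·(x(1−x) − γ) = x(1−x) (equivalently, when x(1−x) ≠ γ, if and only if y = x(1−x)/(x(1−x) − γ)); and (b) det J = 0 if and only if y = 1/(1 − x). -/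
/-- For `0 < x < 1`, `y > 0`, `γ > 0` and the CSTR (β = 0) Jacobian `J` at `(x,y)`:
(a) `trace J = 0 ↔ y(x(1−x) − γ) = x(1−x)` (equivalently, when `x(1−x) ≠ γ`,
`y = x(1−x)/(x(1−x) − γ)`); (b) `det J = 0 ↔ y = 1/(1 − x)`. -/
theorem stmt_5 (x y γ : ℝ) (hx0 : 0 < x) (hx1 : x < 1) (hy : 0 < y) (hγ : 0 < γ) :
    let J : Matrix (Fin 2) (Fin 2) ℝ :=
      !![-Real.exp y / x, Real.exp y * (1 - x);
         -Real.exp y / γ, -Real.exp y * (1 - x) * (1 - y) / (γ * y)]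
    (Matrix.trace J = 0 ↔ y * (x * (1 - x) - γ) = x * (1 - x)) ∧
    (x * (1 - x) ≠ γ →
      (Matrix.trace J = 0 ↔ y = x * (1 - x) / (x * (1 - x) - γ))) ∧
    (J.det = 0 ↔ y = 1 / (1 - x)) := by
  intro J
  have hx : x ≠ 0 := hx0.ne'
  have hy' : y ≠ 0 := hy.ne'
  have hγ' : γ ≠ 0 := hγ.ne'
  have h1x : (1 : ℝ) - x ≠ 0 := by linarith
  have he : Real.exp y ≠ 0 := (Real.exp_pos y).ne'
  have htr : Matrix.trace J = -Real.exp y / x + -Real.exp y * (1 - x) * (1 - y) / (γ * y) := by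
    simp [J, Matrix.trace_fin_two]
  have hdet : J.det = (-Real.exp y / x) * (-Real.exp y * (1 - x) * (1 - y) / (γ * y))
      - (Real.exp y * (1 - x)) * (-Real.exp y / γ) := by
    simp [J, Matrix.det_fin_two_of]
  have hA : (Matrix.trace J = 0 ↔ y * (x * (1 - x) - γ) = x * (1 - x)) := by
    rw [htr]
    rw [div_add_div _ _ hx (by positivity : γ * y ≠ 0)]
    rw [div_eq_zero_iff]
    constructor
    · rintro (h | h)
      · nlinarith [Real.exp_pos y]
      · exact absurd h (by positivity)
    · intro h
      left; nlinarith [Real.exp_pos y]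
  refine ⟨hA, ?_, ?_⟩
  · intro hne
    rw [hA, eq_div_iff (sub_ne_zero.mpr hne)]
  · rw [hdet]
    have : (-Real.exp y / x) * (-Real.exp y * (1 - x) * (1 - y) / (γ * y))
      - (Real.exp y * (1 - x)) * (-Real.exp y / γ)
      = Real.exp y * Real.exp y * (1 - x) * ((1 - y) + x * y) / (x * γ * y) := by
      field_simp
      ring
    rw [this, div_eq_zero_iff]
    constructor
    · rintro (h | h)
      · have h2 : (1 - y) + x * y = 0 := by
          rcases mul_eq_zero.mp h with h' | h'
          · rcases mul_eq_zero.mp h' with h'' | h''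
            · exact absurd h'' (by positivity)
            · exact absurd h'' h1x
          · exact h'
        rw [eq_div_iff h1x]; nlinarith
      · exact absurd h (by positivity)
    · intro h
      left
      have h2 : 1 - y + x * y = 0 := by
        have : y * (1 - x) = 1 := by rw [h]; field_simp
        nlinarith
      rw [h2]; ring
end

section
/- Let γ > 0 and 0 < x < 1 with x(1−x) > γ, set y = x(1−x)/(x(1−x) − γ) (so y > 0), and let J be the Jacobian matrix of the CSTR model (β = 0) at (x, y). Then J² = −k·I₂, where k = −p(x)·e^{2y}/(x²γ) and p(x) = x³ − x² + γ. -/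
lemma stmt_7_aux (x γ y E : ℝ) (hx : x ≠ 0) (hγ : γ ≠ 0) (hy : y ≠ 0)
    (hx1 : (1 : ℝ) - x ≠ 0) (hkey : y * (x * (1 - x) - γ) = x * (1 - x)) :
    (!![-E / x, E * (1 - x); -E / γ, -E * (1 - x) * (1 - y) / (γ * y)] *
      !![-E / x, E * (1 - x); -E / γ, -E * (1 - x) * (1 - y) / (γ * y)]
      : Matrix (Fin 2) (Fin 2) ℝ) =
    (-(-(x ^ 3 - x ^ 2 + γ) * (E * E) / (x ^ 2 * γ))) • (1 : Matrix (Fin 2) (Fin 2) ℝ) := by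
  have h11 : -E * (1 - x) * (1 - y) / (γ * y) = E / x := by
    rw [div_eq_div_iff (by simp [hγ, hy, mul_ne_zero]) hx]
    linear_combination E * hkey
  rw [h11]
  ext i j
  fin_cases i <;> fin_cases j <;>
    simp [Matrix.mul_apply, Fin.sum_univ_two, Matrix.one_apply] <;>
    field_simp <;> ring

/-- With `γ > 0`, `0 < x < 1`, `x(1−x) > γ`, `y = x(1−x)/(x(1−x)−γ)`, and
`J` the CSTR (β = 0) Jacobian at `(x,y)`: `J² = −k·I₂` with
`k = −p(x)e^{2y}/(x²γ)`, `p(x) = x³ − x² + γ`. -/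
theorem stmt_7 (x γ : ℝ) (hγ : 0 < γ) (hx0 : 0 < x) (hx1 : x < 1)
    (hxγ : γ < x * (1 - x)) :
    let y := x * (1 - x) / (x * (1 - x) - γ)
    let k := -(x ^ 3 - x ^ 2 + γ) * Real.exp (2 * y) / (x ^ 2 * γ)
    let J : Matrix (Fin 2) (Fin 2) ℝ :=
      !![-Real.exp y / x, Real.exp y * (1 - x);
         -Real.exp y / γ, -Real.exp y * (1 - x) * (1 - y) / (γ * y)]
    J * J = (-k) • (1 : Matrix (Fin 2) (Fin 2) ℝ) := by
  intro y k J
  have hd : x * (1 - x) - γ ≠ 0 := by nlinarith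
  have hx : x ≠ 0 := ne_of_gt hx0
  have hγ' : γ ≠ 0 := ne_of_gt hγ
  have hx1' : (1 : ℝ) - x ≠ 0 := by nlinarith
  have hypos : 0 < y := div_pos (by nlinarith) (by nlinarith)
  have hy : y ≠ 0 := ne_of_gt hypos
  have hkey : y * (x * (1 - x) - γ) = x * (1 - x) := by
    show x * (1 - x) / (x * (1 - x) - γ) * (x * (1 - x) - γ) = x * (1 - x)
    field_simp
  have h2 : Real.exp (2 * y) = Real.exp y * Real.exp y := by
    rw [← Real.exp_add]; ring_nf
  show J * J = (-(-(x ^ 3 - x ^ 2 + γ) * Real.exp (2 * y) / (x ^ 2 * γ))) •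
    (1 : Matrix (Fin 2) (Fin 2) ℝ)
  rw [h2]
  exact stmt_7_aux x γ y (Real.exp y) hx hγ' hy hx1' hkey
end

section
/- Let γ > 0 and 0 < x < 1 with x(1−x) > γ, set y = x(1−x)/(x(1−x) − γ), k = −p(x)·e^{2y}/(x²γ) with p(x) = x³ − x² + γ, and let J be the Jacobian matrix of the CSTR model (β = 0) at (x, y). If p(x) < 0 (so k > 0), then the eigenvalues of J (over ℂ) are exactly the purely imaginary pair ±i√k. If p(x) > 0 (so k < 0), then J has exactly the two real eigenvalues √(−k) and −√(−k), i.e., the equilibrium is a neutral saddle. -/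
lemma sq_eq_sq_field {K : Type*} [Field K] (μ a : K) : μ ^ 2 = a ^ 2 ↔ μ = a ∨ μ = -a := by
  constructor
  · intro h
    have h2 : (μ - a) * (μ + a) = 0 := by linear_combination h
    rcases mul_eq_zero.1 h2 with h3 | h3
    · exact Or.inl (by linear_combination h3)
    · exact Or.inr (by linear_combination h3)
  · rintro (rfl | rfl) <;> ring

lemma spectrum_fin_two {K : Type*} [Field K] (M : Matrix (Fin 2) (Fin 2) K)
    (h : M 0 0 + M 1 1 = 0) :
    spectrum K M = {μ | μ ^ 2 + M.det = 0} := by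
  ext μ
  rw [spectrum.mem_iff, Matrix.isUnit_iff_isUnit_det, isUnit_iff_ne_zero, not_not]
  have hM : algebraMap K (Matrix (Fin 2) (Fin 2) K) μ - M =
      !![μ - M 0 0, -M 0 1; -M 1 0, μ - M 1 1] := by
    ext i j
    fin_cases i <;> fin_cases j <;>
      simp [Matrix.algebraMap_matrix_apply]
  rw [hM, Matrix.det_fin_two_of, Matrix.det_fin_two, Set.mem_setOf_eq]
  constructor <;> intro hh <;> [linear_combination hh + μ * h; linear_combination hh - μ * h]

/-- With `γ > 0`, `0 < x < 1`, `x(1−x) > γ`, `y = x(1−x)/(x(1−x)−γ)`,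
`k = −p(x)e^{2y}/(x²γ)`, `p(x) = x³ − x² + γ`, and `J` the CSTR (β = 0) Jacobian at `(x,y)`:
if `p(x) < 0` then `k > 0` and the eigenvalues of `J` over `ℂ` are exactly `±i√k`;
if `p(x) > 0` then `k < 0` and `J` has exactly the two real eigenvalues `±√(−k)`
(a neutral saddle). -/
theorem stmt_8 (x γ : ℝ) (hγ : 0 < γ) (hx0 : 0 < x) (hx1 : x < 1)
    (hxγ : γ < x * (1 - x)) :
    let y := x * (1 - x) / (x * (1 - x) - γ)
    let k := -(x ^ 3 - x ^ 2 + γ) * Real.exp (2 * y) / (x ^ 2 * γ)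
    let J : Matrix (Fin 2) (Fin 2) ℝ :=
      !![-Real.exp y / x, Real.exp y * (1 - x);
         -Real.exp y / γ, -Real.exp y * (1 - x) * (1 - y) / (γ * y)]
    (x ^ 3 - x ^ 2 + γ < 0 → 0 < k ∧
      spectrum ℂ (J.map (Complex.ofReal)) =
        {Complex.I * (Real.sqrt k : ℂ), -(Complex.I * (Real.sqrt k : ℂ))}) ∧
    (0 < x ^ 3 - x ^ 2 + γ → k < 0 ∧
      spectrum ℝ J = {Real.sqrt (-k), -Real.sqrt (-k)}) := by
  intro y k J
  have hyv : y = x * (1 - x) / (x * (1 - x) - γ) := rfl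
  have hkv : k = -(x ^ 3 - x ^ 2 + γ) * Real.exp (2 * y) / (x ^ 2 * γ) := rfl
  have hJ00 : J 0 0 = -Real.exp y / x := rfl
  have hJ01 : J 0 1 = Real.exp y * (1 - x) := rfl
  have hJ10 : J 1 0 = -Real.exp y / γ := rfl
  have hJ11 : J 1 1 = -Real.exp y * (1 - x) * (1 - y) / (γ * y) := rfl
  have hD : 0 < x * (1 - x) - γ := by linarith
  have hx1' : 0 < 1 - x := by linarith
  have hy0 : 0 < y := by rw [hyv]; exact div_pos (lt_trans hγ hxγ) hD
  have htr : J 0 0 + J 1 1 = 0 := by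
    rw [hJ00, hJ11, hyv]
    field_simp
    ring
  have hdet : J.det = k := by
    rw [Matrix.det_fin_two, hJ00, hJ01, hJ10, hJ11, hkv, two_mul, Real.exp_add, hyv]
    field_simp
    ring
  have hsR : spectrum ℝ J = {μ | μ ^ 2 + k = 0} := by
    rw [spectrum_fin_two J htr, hdet]
  have htrC : (J.map Complex.ofReal) 0 0 + (J.map Complex.ofReal) 1 1 = 0 := by
    simp only [Matrix.map_apply, ← Complex.ofReal_add, htr, Complex.ofReal_zero]
  have hdetC : (J.map Complex.ofReal).det = (k : ℂ) := by
    rw [Matrix.det_fin_two]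
    simp only [Matrix.map_apply, ← Complex.ofReal_mul, ← Complex.ofReal_sub,
      ← Matrix.det_fin_two, hdet]
  have hsC : spectrum ℂ (J.map Complex.ofReal) = {μ | μ ^ 2 + (k : ℂ) = 0} := by
    rw [spectrum_fin_two _ htrC, hdetC]
  constructor
  · intro hp
    have hk : 0 < k := by
      rw [hkv]
      exact div_pos (mul_pos (by linarith) (Real.exp_pos _)) (by positivity)
    refine ⟨hk, ?_⟩
    have ha : (Complex.I * (Real.sqrt k : ℂ)) ^ 2 = -(k : ℂ) := by
      have h1 : (Real.sqrt k : ℝ) ^ 2 = k := Real.sq_sqrt hk.le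
      calc (Complex.I * (Real.sqrt k : ℂ)) ^ 2
          = Complex.I ^ 2 * ((Real.sqrt k : ℝ) ^ 2 : ℝ) := by push_cast; ring
        _ = -(k : ℂ) := by rw [Complex.I_sq, h1]; ring
    rw [hsC]
    ext μ
    simp only [Set.mem_setOf_eq, Set.mem_insert_iff, Set.mem_singleton_iff]
    rw [← sq_eq_sq_field μ (Complex.I * (Real.sqrt k : ℂ))]
    constructor <;> intro h
    · linear_combination h - ha
    · linear_combination h + ha
  · intro hp
    have hk : k < 0 := by
      rw [hkv]
      apply div_neg_of_neg_of_pos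
      · exact mul_neg_of_neg_of_pos (by linarith) (Real.exp_pos _)
      · positivity
    refine ⟨hk, ?_⟩
    have ha : (Real.sqrt (-k)) ^ 2 = -k := Real.sq_sqrt (by linarith)
    rw [hsR]
    ext μ
    simp only [Set.mem_setOf_eq, Set.mem_insert_iff, Set.mem_singleton_iff]
    rw [← sq_eq_sq_field μ (Real.sqrt (-k))]
    constructor <;> intro h
    · linear_combination h - ha
    · linear_combination h + ha
end

section
/- Let γ > 0 and s ∈ (0, 1) with s²(1−s) > γ. Set y = s(1−s)/(s(1−s) − γ), σ = s·e^{−y}/(s(1−s) − γ), δ = s·e^{−y}/(1−s). Then (s, y) is an equilibrium of the CSTR model with β = 0 (i.e., s = δy/σ and σ − δy = y·e^{−y}), and the Jacobian matrix J at (s, y) has trace 0 and positive determinant, hence a pair of nonzero purely imaginary complex-conjugate eigenvalues; i.e., the map s ↦ (σ, δ) parameterizes the curve of Hopf bifurcations. -/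
lemma spec_aux (a b c d : ℝ) (ω : ℝ) (htr : a + d = 0) (hdet : a * d - b * c = ω ^ 2) :
    spectrum ℂ ((!![a, b; c, d] : Matrix (Fin 2) (Fin 2) ℝ).map Complex.ofReal) =
      {Complex.I * (ω : ℂ), -(Complex.I * (ω : ℂ))} := by
  have htrC : (a:ℂ) + d = 0 := by exact_mod_cast congrArg Complex.ofReal htr
  have hdetC : (a:ℂ) * d - b * c = (ω:ℂ) ^ 2 := by exact_mod_cast congrArg Complex.ofReal hdet
  ext z
  rw [spectrum.mem_iff, Matrix.isUnit_iff_isUnit_det, isUnit_iff_ne_zero, not_ne_iff]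
  have hM : (algebraMap ℂ (Matrix (Fin 2) (Fin 2) ℂ)) z -
      (!![a, b; c, d] : Matrix (Fin 2) (Fin 2) ℝ).map Complex.ofReal =
      !![z - a, -b; -c, z - d] := by
    ext i j
    fin_cases i <;> fin_cases j <;>
      simp [Matrix.algebraMap_matrix_apply, Matrix.map_apply]
  rw [hM, Matrix.det_fin_two_of]
  have hfact : (z - (a:ℂ)) * (z - d) - (-b) * (-c) =
      (z - Complex.I * (ω:ℂ)) * (z + Complex.I * (ω:ℂ)) := by
    linear_combination (-z) * htrC + hdetC + (ω:ℂ) ^ 2 * Complex.I_sq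
  rw [hfact, mul_eq_zero, sub_eq_zero, add_eq_zero_iff_eq_neg]
  simp [Set.mem_insert_iff]

/-- For `γ > 0`, `s ∈ (0,1)` with `s²(1−s) > γ`, and
`y = s(1−s)/(s(1−s)−γ)`, `σ = s·e^{−y}/(s(1−s)−γ)`, `δ = s·e^{−y}/(1−s)`:
`(s, y)` is an equilibrium of the CSTR model with `β = 0`, and the Jacobian `J` at `(s,y)`
has trace 0 and positive determinant, hence a pair of nonzero purely imaginary
complex-conjugate eigenvalues. -/
theorem stmt_9 (γ s : ℝ) (hγ : 0 < γ) (hs0 : 0 < s) (hs1 : s < 1)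
    (h : γ < s ^ 2 * (1 - s)) :
    let y := s * (1 - s) / (s * (1 - s) - γ)
    let σ := s * Real.exp (-y) / (s * (1 - s) - γ)
    let δ := s * Real.exp (-y) / (1 - s)
    let J : Matrix (Fin 2) (Fin 2) ℝ :=
      !![-Real.exp y / s, Real.exp y * (1 - s);
         -Real.exp y / γ, -Real.exp y * (1 - s) * (1 - y) / (γ * y)]
    s = δ * y / σ ∧ σ - δ * y = y * Real.exp (-y) ∧
      Matrix.trace J = 0 ∧ 0 < J.det ∧
      ∃ ω : ℝ, 0 < ω ∧ spectrum ℂ (J.map Complex.ofReal) =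
        {Complex.I * (ω : ℂ), -(Complex.I * (ω : ℂ))} := by
  intro y σ δ J
  have hD : 0 < s * (1 - s) - γ := by nlinarith
  have hD' : s * (1 - s) - γ ≠ 0 := ne_of_gt hD
  have h1s : (0:ℝ) < 1 - s := by linarith
  have hy : y = s * (1 - s) / (s * (1 - s) - γ) := rfl
  have hypos : 0 < y := by rw [hy]; positivity
  have hy' : y * (s * (1 - s) - γ) = s * (1 - s) := by rw [hy]; field_simp
  have hyγ : γ * y = s * (1 - s) * (y - 1) := by linear_combination (-1 : ℝ) * hy'
  have hkey : 0 < 1 - y * (1 - s) := by nlinarith [hy', h, hD, mul_pos hs0 h1s]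
  have hE : 0 < Real.exp (-y) := Real.exp_pos _
  have hEy : 0 < Real.exp y := Real.exp_pos _
  have hσ : σ = s * Real.exp (-y) / (s * (1 - s) - γ) := rfl
  have hδ : δ = s * Real.exp (-y) / (1 - s) := rfl
  have c1 : s = δ * y / σ := by
    rw [hδ, hσ, hy]; field_simp
  have c2 : σ - δ * y = y * Real.exp (-y) := by
    rw [hδ, hσ, hy]; field_simp
  have htr : (-Real.exp y / s) + (-Real.exp y * (1 - s) * (1 - y) / (γ * y)) = 0 := by
    field_simp
    nlinarith [hyγ, hEy]
  have htrJ : Matrix.trace J = 0 := by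
    show Matrix.trace !![-Real.exp y / s, Real.exp y * (1 - s);
         -Real.exp y / γ, -Real.exp y * (1 - s) * (1 - y) / (γ * y)] = 0
    rw [Matrix.trace_fin_two_of]
    exact htr
  have hdetJ : J.det = Real.exp y * Real.exp y * (1 - s) * (1 - y * (1 - s)) / (γ * s * y) := by
    show Matrix.det !![-Real.exp y / s, Real.exp y * (1 - s);
         -Real.exp y / γ, -Real.exp y * (1 - s) * (1 - y) / (γ * y)] = _
    rw [Matrix.det_fin_two_of]
    field_simp
    ring
  have hdpos : 0 < J.det := by rw [hdetJ]; positivity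
  refine ⟨c1, c2, htrJ, hdpos, Real.sqrt J.det, Real.sqrt_pos.mpr hdpos, ?_⟩
  have hω2 : Real.sqrt J.det ^ 2 = J.det := Real.sq_sqrt hdpos.le
  have hdet' : (-Real.exp y / s) * (-Real.exp y * (1 - s) * (1 - y) / (γ * y)) -
      (Real.exp y * (1 - s)) * (-Real.exp y / γ) = Real.sqrt J.det ^ 2 := by
    rw [hω2]
    show _ = Matrix.det J
    rw [show Matrix.det J = Matrix.det !![-Real.exp y / s, Real.exp y * (1 - s);
         -Real.exp y / γ, -Real.exp y * (1 - s) * (1 - y) / (γ * y)] from rfl,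
       Matrix.det_fin_two_of]
  exact spec_aux _ _ _ _ _ htr hdet'
end

section
/- Let γ > 0, 0 < x < 1, and θ ∈ ℝ with sin θ ≠ 0 and cos θ ≠ 0, and suppose D := 1 + γ/(x(1−x)) − cot θ/(1−x) − γ tan θ satisfies D > 0; set y = 1/D and let J be the Jacobian matrix of the CSTR model (β = 0) at (x, y). Then the vector v = (cos θ, sin θ)ᵀ is an eigenvector of J with eigenvalue λ = −(e^y/x)(1 − x(1−x)tan θ), so that J²v = −kv with k = −(1 − x(1−x)tan θ)²·e^{2y}/x² ≤ 0; moreover the other eigenvalue of J equals e^y(x cot θ − γ)/(xγ). -/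
/-- For `γ > 0`, `0 < x < 1`, `θ` with `sin θ ≠ 0 ≠ cos θ`, and
`D = 1 + γ/(x(1−x)) − cot θ/(1−x) − γ tan θ > 0`, set `y = 1/D` and let `J` be the CSTR
(β = 0) Jacobian at `(x,y)`. Then `v = (cos θ, sin θ)ᵀ` is an eigenvector of `J` with
eigenvalue `λ = −(e^y/x)(1 − x(1−x)tan θ)`, so that `J²v = −kv` with
`k = −(1 − x(1−x)tan θ)²e^{2y}/x² ≤ 0`, and the other eigenvalue of `J` equals
`e^y(x cot θ − γ)/(xγ)`. -/
theorem stmt_12 (γ x θ : ℝ) (hγ : 0 < γ) (hx0 : 0 < x) (hx1 : x < 1)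
    (hs : Real.sin θ ≠ 0) (hc : Real.cos θ ≠ 0)
    (hD : 0 < 1 + γ / (x * (1 - x)) - (Real.cos θ / Real.sin θ) / (1 - x)
      - γ * Real.tan θ) :
    let y := (1 + γ / (x * (1 - x)) - (Real.cos θ / Real.sin θ) / (1 - x)
      - γ * Real.tan θ)⁻¹
    let J : Matrix (Fin 2) (Fin 2) ℝ :=
      !![-Real.exp y / x, Real.exp y * (1 - x);
         -Real.exp y / γ, -Real.exp y * (1 - x) * (1 - y) / (γ * y)]
    let lam := -(Real.exp y / x) * (1 - x * (1 - x) * Real.tan θ)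
    let k := -(1 - x * (1 - x) * Real.tan θ) ^ 2 * Real.exp (2 * y) / x ^ 2
    let mu := Real.exp y * (x * (Real.cos θ / Real.sin θ) - γ) / (x * γ)
    J.mulVec ![Real.cos θ, Real.sin θ] = lam • ![Real.cos θ, Real.sin θ] ∧
    J.mulVec (J.mulVec ![Real.cos θ, Real.sin θ]) = (-k) • ![Real.cos θ, Real.sin θ] ∧
    k ≤ 0 ∧ mu ∈ spectrum ℝ J ∧ Matrix.trace J = lam + mu := by
  intro y J lam k mu
  have hx : x ≠ 0 := ne_of_gt hx0
  have h1x : (1:ℝ) - x ≠ 0 := by intro h; nlinarith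
  have hγ' : γ ≠ 0 := ne_of_gt hγ
  have ht : Real.tan θ = Real.sin θ / Real.cos θ := Real.tan_eq_sin_div_cos θ
  have hD' : (1 + γ / (x * (1 - x)) - (Real.cos θ / Real.sin θ) / (1 - x)
      - γ * Real.tan θ) ≠ 0 := ne_of_gt hD
  have hy : y = (1 + γ / (x * (1 - x)) - (Real.cos θ / Real.sin θ) / (1 - x)
      - γ * Real.tan θ)⁻¹ := rfl
  have hJdef : J = !![-Real.exp y / x, Real.exp y * (1 - x);
         -Real.exp y / γ, -Real.exp y * (1 - x) * (1 - y) / (γ * y)] := rfl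
  have hlam : lam = -(Real.exp y / x) * (1 - x * (1 - x) * Real.tan θ) := rfl
  have hk : k = -(1 - x * (1 - x) * Real.tan θ) ^ 2 * Real.exp (2 * y) / x ^ 2 := rfl
  have hmu : mu = Real.exp y * (x * (Real.cos θ / Real.sin θ) - γ) / (x * γ) := rfl
  clear_value y J lam k mu
  have hyne : y ≠ 0 := by rw [hy]; exact inv_ne_zero hD'
  have hinv : y⁻¹ = 1 + γ / (x * (1 - x)) - (Real.cos θ / Real.sin θ) / (1 - x)
      - γ * Real.tan θ := by rw [hy, inv_inv]
  have hE : (1 - y) / y = γ / (x * (1 - x)) - (Real.cos θ / Real.sin θ) / (1 - x)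
      - γ * (Real.sin θ / Real.cos θ) := by
    have h2 : (1 - y) / y = y⁻¹ - 1 := by field_simp
    rw [h2, hinv, ht]; ring
  have key : -(Real.exp y * (1 - x) * (1 - y)) / (γ * y)
      = -Real.exp y * (1 - x) * (γ / (x * (1 - x)) - (Real.cos θ / Real.sin θ) / (1 - x)
        - γ * (Real.sin θ / Real.cos θ)) / γ := by
    rw [← hE]; ring
  have key' : -Real.exp y * (1 - x) * (1 - y) / (γ * y)
      = -Real.exp y * (1 - x) * (γ / (x * (1 - x)) - (Real.cos θ / Real.sin θ) / (1 - x)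
        - γ * (Real.sin θ / Real.cos θ)) / γ := by
    rw [← hE]; ring
  have h1 : J.mulVec ![Real.cos θ, Real.sin θ] = lam • ![Real.cos θ, Real.sin θ] := by
    rw [hJdef, hlam]
    funext i
    fin_cases i
    · simp [Matrix.mulVec, dotProduct, Fin.sum_univ_two]
      rw [ht]; field_simp; ring
    · simp [Matrix.mulVec, dotProduct, Fin.sum_univ_two]
      rw [key, ht]; field_simp; ring
  refine ⟨h1, ?_, ?_, ?_, ?_⟩
  · rw [h1, Matrix.mulVec_smul, h1, smul_smul]
    congr 1
    rw [hlam, hk, two_mul, Real.exp_add]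
    field_simp
  · rw [hk, neg_mul, neg_div]
    have h2 : (0:ℝ) ≤ (1 - x * (1 - x) * Real.tan θ) ^ 2 * Real.exp (2 * y) / x ^ 2 := by
      positivity
    linarith
  · rw [spectrum.mem_iff]
    intro hu
    rw [Matrix.isUnit_iff_isUnit_det, isUnit_iff_ne_zero] at hu
    apply hu
    rw [hJdef, hmu]
    rw [Matrix.det_fin_two]
    simp [Matrix.algebraMap_matrix_apply]
    rw [key]
    field_simp
    ring
  · rw [hJdef, hlam, hmu, Matrix.trace_fin_two_of]
    rw [key', ht]
    field_simp
    ring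
end

section
/- Let N(x, γ) := 2γ² − x(3−γ)γ + x²(1 + 5γ − 2γ²) − x³(3 + 2γ) + 3x⁴ − x⁵ (the numerator of the first Lyapunov coefficient ℓ₁ along the Hopf curve of the CSTR model with β = 0). Then the set {x ∈ (0,1) : γ < x²(1−x) and N(x, γ) = 0} has exactly one element when 1/8 ≤ γ < (7 − 3√5)/2, exactly two elements when 0 < γ < 1/8, and is empty when γ ≥ (7 − 3√5)/2. -/
/-!
As a polynomial in `γ`, `N(x, γ) = A(x) γ² + B(x) γ + x²(1 - x)³` is quadratic with `A > 0` on
`[0, 1]`, and its discriminant `x²(1 - x)²(2x - 1)(1 + 2(2x - 1)(1 - x))` is positive exactly on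
`(1/2, 1)`. For `x ≤ 1/2` the whole range `γ < x²(1 - x)` lies left of the vertex, where `N`
decreases towards `N(x, x²(1 - x)) = x²(1 - x)³(2x - 1)(x² + x - 1) ≥ 0`, so there are no zeros.
For `1/2 < x < 1` the point `x²(1 - x)` lies right of the vertex, so the smaller root `γ₋(x)`
always satisfies the constraint, and the larger root `γ₊(x)` does exactly when
`N(x, x²(1 - x)) > 0`, i.e. when `x > φ⁻¹`.

Both branches are strictly decreasing; the sign of their derivatives reduces to polynomial
inequalities, proved by expanding in the Bernstein basis of the relevant interval, where all
coefficients are positive. Since `γ₋` maps `(1/2, 1)` onto `(0, 1/8)`, `γ₊` maps `(φ⁻¹, 1)` onto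
`(0, φ⁻⁴)` with `φ⁻⁴ = (7 - 3√5)/2`, and `γ₋ < γ₊`, each `γ` has exactly one preimage under each
branch whose range contains it.
-/

open Set Real
open scoped goldenRatio

noncomputable section

/-- For `a > 0` and a nonnegative discriminant, `ε = 1` gives the larger and `ε = -1` the smaller
root of `a X² + b X + c`. -/
def quadRoot (a b c ε : ℝ) : ℝ := (-b + ε * √(discrim a b c)) / (2 * a)

theorem quadratic_pos_of_lt_of_vertex_le {K : Type*} [Field K] [LinearOrder K]
    [IsStrictOrderedRing K] {a b c m γ : K} (ha : 0 < a) (hv : 2 * a * m + b ≤ 0)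
    (hm : 0 ≤ a * (m * m) + b * m + c) (hγ : γ < m) : 0 < a * (γ * γ) + b * γ + c := by
  have hsplit : a * (γ * γ) + b * γ + c
      = a * (m * m) + b * m + c + (m - γ) * (-(a * (γ + m) + b)) := by
    ring
  have : 0 < m - γ := by linarith
  have : 0 < -(a * (γ + m) + b) := by nlinarith
  rw [hsplit]
  positivity

section QuadRoot

variable {a b c : ℝ}

theorem quadratic_eq_zero_iff_eq_quadRoot (ha : a ≠ 0) (hd : 0 ≤ discrim a b c) (γ : ℝ) :
    a * (γ * γ) + b * γ + c = 0 ↔ γ = quadRoot a b c (-1) ∨ γ = quadRoot a b c 1 := by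
  rw [quadratic_eq_zero_iff ha (mul_self_sqrt hd).symm, or_comm, quadRoot, quadRoot,
    neg_one_mul, one_mul, ← sub_eq_add_neg]

theorem quadRoot_neg_one_lt_quadRoot_one (ha : 0 < a) (hd : 0 < discrim a b c) :
    quadRoot a b c (-1) < quadRoot a b c 1 := by
  have := sqrt_pos.2 hd
  unfold quadRoot
  gcongr
  linarith

theorem quadRoot_neg_one_lt (ha : 0 < a) {m : ℝ} (hm : 0 < 2 * a * m + b) :
    quadRoot a b c (-1) < m := by
  have := sqrt_nonneg (discrim a b c)
  rw [quadRoot, div_lt_iff₀ (by positivity)]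
  linarith

theorem quadRoot_one_lt_iff (ha : 0 < a) {m : ℝ} (hm : 0 < 2 * a * m + b) :
    quadRoot a b c 1 < m ↔ 0 < a * (m * m) + b * m + c := by
  have hroot : quadRoot a b c 1 < m ↔ √(discrim a b c) < 2 * a * m + b := by
    rw [quadRoot, div_lt_iff₀ (by positivity)]
    constructor <;> intro h <;> linarith
  have hsq : (2 * a * m + b) ^ 2 - discrim a b c = 4 * a * (a * (m * m) + b * m + c) := by
    rw [discrim]; ring
  rw [hroot, sqrt_lt' hm, ← sub_pos, hsq, mul_pos_iff_of_pos_left (by positivity)]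

theorem quadRoot_one_eq (ha : a ≠ 0) {m : ℝ} (hm : 0 ≤ 2 * a * m + b)
    (h : a * (m * m) + b * m + c = 0) : quadRoot a b c 1 = m := by
  rw [quadRoot, discrim_eq_sq_of_quadratic_eq_zero h, sqrt_sq hm]
  field_simp
  ring

end QuadRoot

theorem hasDerivAt_quadRoot {a b c : ℝ → ℝ} {a' b' c' x : ℝ} (ε : ℝ) (ha : HasDerivAt a a' x)
    (hb : HasDerivAt b b' x) (hc : HasDerivAt c c' x) (ha0 : a x ≠ 0)
    (hd : 0 < discrim (a x) (b x) (c x)) :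
    HasDerivAt (fun y => quadRoot (a y) (b y) (c y) ε)
      ((ε * (b x * (a x * b' - a' * b x) - 2 * a x * (a x * c' - a' * c x))
        - √(discrim (a x) (b x) (c x)) * (a x * b' - a' * b x))
        / (2 * a x ^ 2 * √(discrim (a x) (b x) (c x)))) x := by
  have hD : HasDerivAt (fun y => discrim (a y) (b y) (c y))
      (2 * b x * b' - 4 * (a' * c x + a x * c')) x :=
    ((hb.fun_pow 2).sub ((ha.const_mul 4).fun_mul hc)).congr_deriv (by push_cast; ring)
  refine (((hb.neg).add ((hD.sqrt hd.ne').const_mul ε)).div (ha.const_mul 2)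
    (by simpa using ha0)).congr_deriv ?_
  have hs := sqrt_pos.2 hd
  have hsq : √(discrim (a x) (b x) (c x)) ^ 2 = b x ^ 2 - 4 * a x * c x := sq_sqrt hd.le
  simp only [Pi.add_apply, Pi.neg_apply]
  field_simp
  linear_combination (-2 * a' * ε) * hsq

theorem continuousOn_quadRoot {a b c : ℝ → ℝ} {s : Set ℝ} (ε : ℝ) (ha : Continuous a)
    (hb : Continuous b) (hc : Continuous c) (ha0 : ∀ x ∈ s, a x ≠ 0) :
    ContinuousOn (fun y => quadRoot (a y) (b y) (c y) ε) s := by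
  unfold quadRoot discrim
  exact ContinuousOn.div (by fun_prop) (by fun_prop) fun x hx => by simpa using ha0 x hx

section StrictAntiFiber

variable {f : ℝ → ℝ} {a b γ : ℝ}

theorem StrictAntiOn.exists_setOf_Ioo_eq_singleton (hf : StrictAntiOn f (Icc a b))
    (hc : ContinuousOn f (Icc a b)) (hab : a ≤ b) (hγ : γ ∈ Ioo (f b) (f a)) :
    ∃ x₀, {x ∈ Ioo a b | f x = γ} = {x₀} := by
  obtain ⟨x₀, hx₀, rfl⟩ := intermediate_value_Ioo' hab hc hγ
  exact ⟨x₀, eq_singleton_iff_unique_mem.2 ⟨⟨hx₀, rfl⟩, fun x hx =>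
    hf.injOn (Ioo_subset_Icc_self hx.1) (Ioo_subset_Icc_self hx₀) hx.2⟩⟩

theorem StrictAntiOn.setOf_Ioo_eq_empty (hf : StrictAntiOn f (Icc a b))
    (hγ : γ ∉ Ioo (f b) (f a)) : {x ∈ Ioo a b | f x = γ} = ∅ := by
  refine eq_empty_of_forall_notMem fun x ⟨hx, hfx⟩ => hγ ?_
  have hab : a ≤ b := (hx.1.trans hx.2).le
  rw [← hfx]
  exact ⟨hf (Ioo_subset_Icc_self hx) (right_mem_Icc.2 hab) hx.2,
    hf (left_mem_Icc.2 hab) (Ioo_subset_Icc_self hx) hx.1⟩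

end StrictAntiFiber

theorem half_lt_inv_goldenRatio : 1 / 2 < φ⁻¹ := by
  rw [inv_goldenRatio, goldenConj]
  have : 2 < √5 := by rw [lt_sqrt (by norm_num)]; norm_num
  linarith

theorem inv_goldenRatio_lt_five_eighths : φ⁻¹ < 5 / 8 := by
  rw [inv_goldenRatio, goldenConj]
  have : √5 < 9 / 4 := by rw [sqrt_lt' (by norm_num)]; norm_num
  linarith

theorem inv_goldenRatio_lt_iff {x : ℝ} (hx : 0 < x) : φ⁻¹ < x ↔ 0 < x ^ 2 + x - 1 := by
  have hfac : x ^ 2 + x - 1 = (x - φ⁻¹) * (x + φ) := by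
    rw [inv_goldenRatio, goldenRatio, goldenConj]
    linear_combination (1 / 4 : ℝ) * sq_sqrt (show (0 : ℝ) ≤ 5 by norm_num)
  rw [hfac, mul_pos_iff_of_pos_right (by linarith [goldenRatio_pos]), sub_pos]

def hopfA (x : ℝ) : ℝ := 2 + x - 2 * x ^ 2

def hopfB (x : ℝ) : ℝ := 5 * x ^ 2 - 2 * x ^ 3 - 3 * x

def hopfC (x : ℝ) : ℝ := x ^ 2 * (1 - x) ^ 3

def hopfDisc (x : ℝ) : ℝ := discrim (hopfA x) (hopfB x) (hopfC x)

def hopfRoot (ε x : ℝ) : ℝ := quadRoot (hopfA x) (hopfB x) (hopfC x) ε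

/-- With `'` the derivative in `x`, `hopfP = A B' - A' B` and
`hopfK = B hopfP - 2 A (A C' - A' C)`, as in `hasDerivAt_quadRoot`. -/
def hopfP (x : ℝ) : ℝ := 4 * x ^ 4 - 4 * x ^ 3 - 13 * x ^ 2 + 20 * x - 6

def hopfK (x : ℝ) : ℝ :=
  x * (1 - x) * (2 - 28 * x + 101 * x ^ 2 - 116 * x ^ 3 + 4 * x ^ 4 + 60 * x ^ 5 - 24 * x ^ 6)

section Hopf

variable {x : ℝ}

theorem hopfA_pos (h0 : 0 ≤ x) (h1 : x ≤ 1) : 0 < hopfA x := by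
  unfold hopfA; nlinarith

theorem hopfDisc_pos (h0 : 1 / 2 < x) (h1 : x < 1) : 0 < hopfDisc x := by
  have hfac : hopfDisc x
      = x ^ 2 * (1 - x) ^ 2 * (2 * x - 1) * (1 + 2 * (2 * x - 1) * (1 - x)) := by
    unfold hopfDisc hopfA hopfB hopfC discrim; ring
  have : 0 < x := by linarith
  have : 0 < 1 - x := by linarith
  have : 0 < 2 * x - 1 := by linarith
  rw [hfac]; positivity

theorem hopf_quadratic_eval_bound (x : ℝ) :
    hopfA x * (x ^ 2 * (1 - x) * (x ^ 2 * (1 - x))) + hopfB x * (x ^ 2 * (1 - x)) + hopfC x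
      = x ^ 2 * (1 - x) ^ 3 * (2 * x - 1) * (x ^ 2 + x - 1) := by
  unfold hopfA hopfB hopfC; ring

theorem hopf_quadratic_deriv_bound (x : ℝ) :
    2 * hopfA x * (x ^ 2 * (1 - x)) + hopfB x
      = x * (1 - x) * (2 * x - 1) * (3 - 2 * x ^ 2) := by
  unfold hopfA hopfB; ring

theorem hopf_quadratic_deriv_bound_pos (h0 : 1 / 2 < x) (h1 : x < 1) :
    0 < 2 * hopfA x * (x ^ 2 * (1 - x)) + hopfB x := by
  have : 0 < 1 - x := by linarith
  have : 0 < 2 * x - 1 := by linarith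
  have : 0 < 3 - 2 * x ^ 2 := by nlinarith
  rw [hopf_quadratic_deriv_bound]; positivity

theorem hopf_quadratic_pos_of_le_half {γ : ℝ} (h0 : 0 < x) (h : x ≤ 1 / 2)
    (hγ : γ < x ^ 2 * (1 - x)) :
    0 < hopfA x * (γ * γ) + hopfB x * γ + hopfC x := by
  have : 0 ≤ 1 - 2 * x := by linarith
  have : 0 < 1 - x := by linarith
  have : 0 < 3 - 2 * x ^ 2 := by nlinarith
  have : 0 < 1 - x - x ^ 2 := by nlinarith
  refine quadratic_pos_of_lt_of_vertex_le (hopfA_pos h0.le (by linarith)) ?_ ?_ hγ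
  · rw [hopf_quadratic_deriv_bound]
    nlinarith [show 0 ≤ x * (1 - x) * (1 - 2 * x) * (3 - 2 * x ^ 2) by positivity]
  · rw [hopf_quadratic_eval_bound]
    nlinarith [show 0 ≤ x ^ 2 * (1 - x) ^ 3 * (1 - 2 * x) * (1 - x - x ^ 2) by positivity]

theorem hasDerivAt_hopfA (x : ℝ) : HasDerivAt hopfA (1 - 4 * x) x :=
  (((hasDerivAt_id x).const_add 2).sub ((hasDerivAt_pow 2 x).const_mul 2)).congr_deriv
    (by simp; ring)

theorem hasDerivAt_hopfB (x : ℝ) : HasDerivAt hopfB (10 * x - 6 * x ^ 2 - 3) x :=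
  ((((hasDerivAt_pow 2 x).const_mul 5).sub ((hasDerivAt_pow 3 x).const_mul 2)).sub
    ((hasDerivAt_id x).const_mul 3)).congr_deriv (by simp; ring)

theorem hasDerivAt_hopfC (x : ℝ) : HasDerivAt hopfC (x * (1 - x) ^ 2 * (2 - 5 * x)) x :=
  ((hasDerivAt_pow 2 x).mul (((hasDerivAt_id x).const_sub 1).fun_pow 3)).congr_deriv
    (by simp; ring)

theorem continuousOn_hopfRoot (ε : ℝ) : ContinuousOn (hopfRoot ε) (Icc (1 / 2) 1) :=
  continuousOn_quadRoot ε (by unfold hopfA; fun_prop) (by unfold hopfB; fun_prop)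
    (by unfold hopfC; fun_prop) fun _ hx => (hopfA_pos (by linarith [hx.1]) hx.2).ne'

theorem deriv_hopfRoot_neg {ε : ℝ} (h0 : 1 / 2 < x) (h1 : x < 1)
    (h : ε * hopfK x < √(hopfDisc x) * hopfP x) : deriv (hopfRoot ε) x < 0 := by
  have hA := hopfA_pos (by linarith) h1.le
  have hs := sqrt_pos.2 (hopfDisc_pos h0 h1)
  have hP : hopfA x * (10 * x - 6 * x ^ 2 - 3) - (1 - 4 * x) * hopfB x = hopfP x := by
    unfold hopfA hopfB hopfP; ring
  have hK : hopfB x * hopfP x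
      - 2 * hopfA x * (hopfA x * (x * (1 - x) ^ 2 * (2 - 5 * x)) - (1 - 4 * x) * hopfC x)
      = hopfK x := by
    unfold hopfA hopfB hopfC hopfP hopfK; ring
  have hderiv : HasDerivAt (hopfRoot ε) _ x := hasDerivAt_quadRoot ε (hasDerivAt_hopfA x)
    (hasDerivAt_hopfB x) (hasDerivAt_hopfC x) hA.ne' (hopfDisc_pos h0 h1)
  rw [hderiv.deriv, hP, hK]
  exact div_neg_of_neg_of_pos (by unfold hopfDisc at h; linarith) (by positivity)

theorem hopfP_pos (h0 : 1 / 2 < x) (h1 : x < 1) : 0 < hopfP x := by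
  have hu : 0 < x - 1 / 2 := by linarith
  have hv : 0 < 1 - x := by linarith
  have hbern : hopfP x = 8 * (1 - x) ^ 4 + 80 * (x - 1 / 2) * (1 - x) ^ 3
      + 140 * (x - 1 / 2) ^ 2 * (1 - x) ^ 2 + 80 * (x - 1 / 2) ^ 3 * (1 - x)
      + 16 * (x - 1 / 2) ^ 4 := by
    unfold hopfP; ring
  rw [hbern]; positivity

theorem hopfK_pos (h0 : 1 / 2 < x) (h1 : x ≤ 5 / 8) : 0 < hopfK x := by
  have hx : 0 < x := by linarith
  have hu : 0 < x - 1 / 2 := by linarith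
  have hv : 0 < 1 - x := by linarith
  have hw : 0 ≤ 5 / 8 - x := by linarith
  have hbern : hopfK x = x * (1 - x) * (131072 * (5 / 8 - x) ^ 6
      + 860160 * (x - 1 / 2) * (5 / 8 - x) ^ 5 + 2275328 * (x - 1 / 2) ^ 2 * (5 / 8 - x) ^ 4
      + 3111936 * (x - 1 / 2) ^ 3 * (5 / 8 - x) ^ 3 + 2323456 * (x - 1 / 2) ^ 4 * (5 / 8 - x) ^ 2
      + 897952 * (x - 1 / 2) ^ 5 * (5 / 8 - x) + 140168 * (x - 1 / 2) ^ 6) := by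
    unfold hopfK; ring
  rw [hbern]; positivity

theorem sq_hopfK_lt (h0 : φ⁻¹ < x) (h1 : x < 1) : hopfK x ^ 2 < hopfDisc x * hopfP x ^ 2 := by
  have hx : 0 < x := by linarith [half_lt_inv_goldenRatio]
  have hu : 0 < x - 1 / 2 := by linarith [half_lt_inv_goldenRatio]
  have hv : 0 < 1 - x := by linarith
  have hq : 0 < x ^ 2 + x - 1 := (inv_goldenRatio_lt_iff hx).1 h0
  have hbern : hopfDisc x * hopfP x ^ 2 - hopfK x ^ 2 = x ^ 2 * (1 - x) ^ 3 * (x ^ 2 + x - 1) *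
      (1024 * (1 - x) ^ 9 + 17920 * (x - 1 / 2) * (1 - x) ^ 8
      + 123968 * (x - 1 / 2) ^ 2 * (1 - x) ^ 7 + 434816 * (x - 1 / 2) ^ 3 * (1 - x) ^ 6
      + 848896 * (x - 1 / 2) ^ 4 * (1 - x) ^ 5 + 961024 * (x - 1 / 2) ^ 5 * (1 - x) ^ 4
      + 636928 * (x - 1 / 2) ^ 6 * (1 - x) ^ 3 + 242688 * (x - 1 / 2) ^ 7 * (1 - x) ^ 2
      + 49152 * (x - 1 / 2) ^ 8 * (1 - x) + 4096 * (x - 1 / 2) ^ 9) := by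
    unfold hopfDisc hopfA hopfB hopfC hopfP hopfK discrim; ring
  have : 0 < hopfDisc x * hopfP x ^ 2 - hopfK x ^ 2 := by rw [hbern]; positivity
  linarith

theorem abs_hopfK_lt (h0 : φ⁻¹ < x) (h1 : x < 1) : |hopfK x| < √(hopfDisc x) * hopfP x := by
  have hx : 1 / 2 < x := half_lt_inv_goldenRatio.trans h0
  refine abs_lt_of_sq_lt_sq ?_ (mul_pos (sqrt_pos.2 (hopfDisc_pos hx h1)) (hopfP_pos hx h1)).le
  rw [mul_pow, sq_sqrt (hopfDisc_pos hx h1).le]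
  exact sq_hopfK_lt h0 h1

theorem strictAntiOn_hopfRoot {ε l : ℝ} (hl : 1 / 2 ≤ l)
    (h : ∀ x ∈ Ioo l 1, ε * hopfK x < √(hopfDisc x) * hopfP x) :
    StrictAntiOn (hopfRoot ε) (Icc l 1) :=
  strictAntiOn_of_deriv_neg (convex_Icc l 1) ((continuousOn_hopfRoot ε).mono
    (Icc_subset_Icc_left hl)) fun x hx => by
      rw [interior_Icc] at hx
      exact deriv_hopfRoot_neg (hl.trans_lt hx.1) hx.2 (h x hx)

theorem strictAntiOn_hopfRoot_neg_one : StrictAntiOn (hopfRoot (-1)) (Icc (1 / 2) 1) :=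
  strictAntiOn_hopfRoot le_rfl fun x ⟨h0, h1⟩ => by
    rcases le_or_gt x (5 / 8) with h | h
    · have := hopfK_pos h0 h
      have := mul_pos (sqrt_pos.2 (hopfDisc_pos h0 h1)) (hopfP_pos h0 h1)
      linarith
    · have := abs_hopfK_lt (inv_goldenRatio_lt_five_eighths.trans h) h1
      linarith [neg_abs_le (hopfK x)]

theorem strictAntiOn_hopfRoot_one : StrictAntiOn (hopfRoot 1) (Icc φ⁻¹ 1) :=
  strictAntiOn_hopfRoot half_lt_inv_goldenRatio.le fun x ⟨h0, h1⟩ => by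
    rw [one_mul]
    exact (le_abs_self _).trans_lt (abs_hopfK_lt h0 h1)

theorem hopfRoot_one_right (ε : ℝ) : hopfRoot ε 1 = 0 := by
  norm_num [hopfRoot, quadRoot, hopfA, hopfB, hopfC, discrim]

theorem hopfRoot_neg_one_half : hopfRoot (-1) (1 / 2) = 1 / 8 := by
  norm_num [hopfRoot, quadRoot, hopfA, hopfB, hopfC, discrim]

theorem hopfRoot_one_inv_goldenRatio : hopfRoot 1 φ⁻¹ = (7 - 3 * √5) / 2 := by
  have h0 := half_lt_inv_goldenRatio
  have h1 : φ⁻¹ < 1 := inv_lt_one_of_one_lt₀ one_lt_goldenRatio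
  have hq : φ⁻¹ ^ 2 + φ⁻¹ - 1 = 0 := by
    rw [inv_goldenRatio]; linear_combination goldenConj_sq
  rw [hopfRoot, quadRoot_one_eq (hopfA_pos (by linarith) h1.le).ne'
    (hopf_quadratic_deriv_bound_pos h0 h1).le (by rw [hopf_quadratic_eval_bound, hq, mul_zero])]
  rw [inv_goldenRatio, goldenConj]
  linear_combination ((5 - √5) / 8) * sq_sqrt (show (0 : ℝ) ≤ 5 by norm_num)

theorem hopfRoot_neg_one_lt_bound (h0 : 1 / 2 < x) (h1 : x < 1) :
    hopfRoot (-1) x < x ^ 2 * (1 - x) :=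
  quadRoot_neg_one_lt (hopfA_pos (by linarith) h1.le) (hopf_quadratic_deriv_bound_pos h0 h1)

theorem hopfRoot_one_lt_bound_iff (h0 : 1 / 2 < x) (h1 : x < 1) :
    hopfRoot 1 x < x ^ 2 * (1 - x) ↔ φ⁻¹ < x := by
  have : 0 < 1 - x := by linarith
  have : 0 < 2 * x - 1 := by linarith
  rw [hopfRoot, quadRoot_one_lt_iff (hopfA_pos (by linarith) h1.le)
    (hopf_quadratic_deriv_bound_pos h0 h1), hopf_quadratic_eval_bound,
    mul_pos_iff_of_pos_left (by positivity), inv_goldenRatio_lt_iff (by linarith)]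

theorem hopf_quadratic_eq_zero_in_region_iff {γ : ℝ} :
    (x ∈ Ioo 0 1 ∧ γ < x ^ 2 * (1 - x) ∧ hopfA x * (γ * γ) + hopfB x * γ + hopfC x = 0) ↔
      (x ∈ Ioo (1 / 2) 1 ∧ hopfRoot (-1) x = γ) ∨ (x ∈ Ioo φ⁻¹ 1 ∧ hopfRoot 1 x = γ) := by
  constructor
  · rintro ⟨⟨h0, h1⟩, hγ, hQ⟩
    have hx : 1 / 2 < x := by
      by_contra! h
      exact (hopf_quadratic_pos_of_le_half h0 h hγ).ne' hQ
    rcases (quadratic_eq_zero_iff_eq_quadRoot (hopfA_pos h0.le h1.le).ne'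
      (hopfDisc_pos hx h1).le γ).1 hQ with rfl | rfl
    · exact Or.inl ⟨⟨hx, h1⟩, rfl⟩
    · exact Or.inr ⟨⟨(hopfRoot_one_lt_bound_iff hx h1).1 hγ, h1⟩, rfl⟩
  · rintro (⟨⟨hx, h1⟩, rfl⟩ | ⟨⟨hx, h1⟩, rfl⟩)
    · refine ⟨⟨by linarith, h1⟩, hopfRoot_neg_one_lt_bound hx h1, ?_⟩
      exact (quadratic_eq_zero_iff_eq_quadRoot (hopfA_pos (by linarith) h1.le).ne'
        (hopfDisc_pos hx h1).le _).2 (Or.inl rfl)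
    · have hx' := half_lt_inv_goldenRatio.trans hx
      refine ⟨⟨by linarith, h1⟩, (hopfRoot_one_lt_bound_iff hx' h1).2 hx, ?_⟩
      exact (quadratic_eq_zero_iff_eq_quadRoot (hopfA_pos (by linarith) h1.le).ne'
        (hopfDisc_pos hx' h1).le _).2 (Or.inr rfl)

theorem disjoint_hopfRoot_fibers (γ : ℝ) :
    Disjoint {x ∈ Ioo (1 / 2) 1 | hopfRoot (-1) x = γ} {x ∈ Ioo φ⁻¹ 1 | hopfRoot 1 x = γ} :=
  disjoint_left.2 fun _ ⟨⟨h0, h1⟩, hlo⟩ ⟨_, hhi⟩ => (quadRoot_neg_one_lt_quadRoot_one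
    (hopfA_pos (by linarith) h1.le) (hopfDisc_pos h0 h1)).ne (hlo.trans hhi.symm)

theorem exists_setOf_hopfRoot_neg_one_eq_singleton {γ : ℝ} (hγ : γ ∈ Ioo 0 (1 / 8)) :
    ∃ x₀, {x ∈ Ioo (1 / 2) 1 | hopfRoot (-1) x = γ} = {x₀} :=
  strictAntiOn_hopfRoot_neg_one.exists_setOf_Ioo_eq_singleton (continuousOn_hopfRoot (-1))
    (by norm_num) (by rwa [hopfRoot_one_right, hopfRoot_neg_one_half])

theorem setOf_hopfRoot_neg_one_eq_empty {γ : ℝ} (hγ : 1 / 8 ≤ γ) :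
    {x ∈ Ioo (1 / 2) 1 | hopfRoot (-1) x = γ} = ∅ :=
  strictAntiOn_hopfRoot_neg_one.setOf_Ioo_eq_empty fun h => by
    rw [hopfRoot_neg_one_half] at h; exact hγ.not_gt h.2

theorem exists_setOf_hopfRoot_one_eq_singleton {γ : ℝ} (hγ : γ ∈ Ioo 0 ((7 - 3 * √5) / 2)) :
    ∃ x₀, {x ∈ Ioo φ⁻¹ 1 | hopfRoot 1 x = γ} = {x₀} :=
  strictAntiOn_hopfRoot_one.exists_setOf_Ioo_eq_singleton
    ((continuousOn_hopfRoot 1).mono (Icc_subset_Icc_left half_lt_inv_goldenRatio.le))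
    (inv_lt_one_of_one_lt₀ one_lt_goldenRatio).le
    (by rwa [hopfRoot_one_right, hopfRoot_one_inv_goldenRatio])

theorem setOf_hopfRoot_one_eq_empty {γ : ℝ} (hγ : (7 - 3 * √5) / 2 ≤ γ) :
    {x ∈ Ioo φ⁻¹ 1 | hopfRoot 1 x = γ} = ∅ :=
  strictAntiOn_hopfRoot_one.setOf_Ioo_eq_empty fun h => by
    rw [hopfRoot_one_inv_goldenRatio] at h; exact hγ.not_gt h.2

end Hopf

end

theorem one_eighth_lt_seven_sub_three_mul_sqrt_five_div_two : 1 / 8 < (7 - 3 * √5) / 2 := by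
  have : √5 < 9 / 4 := by rw [sqrt_lt' (by norm_num)]; norm_num
  linarith

/-- Let `N(x,γ)` be the numerator of the first Lyapunov coefficient along
the Hopf curve of the CSTR model with `β = 0`. The set
`{x ∈ (0,1) : γ < x²(1−x) ∧ N(x,γ) = 0}` has exactly one element when
`1/8 ≤ γ < (7 − 3√5)/2`, exactly two elements when `0 < γ < 1/8`, and is empty when
`γ ≥ (7 − 3√5)/2`. -/
theorem stmt_13 (γ : ℝ) :
    let N : ℝ → ℝ := fun x => 2 * γ ^ 2 - x * (3 - γ) * γ + x ^ 2 * (1 + 5 * γ - 2 * γ ^ 2)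
      - x ^ 3 * (3 + 2 * γ) + 3 * x ^ 4 - x ^ 5
    let S := {x : ℝ | x ∈ Set.Ioo (0 : ℝ) 1 ∧ γ < x ^ 2 * (1 - x) ∧ N x = 0}
    ((1 / 8 ≤ γ ∧ γ < (7 - 3 * Real.sqrt 5) / 2) → S.encard = 1) ∧
    ((0 < γ ∧ γ < 1 / 8) → S.encard = 2) ∧
    ((7 - 3 * Real.sqrt 5) / 2 ≤ γ → S = ∅) := by
  intro N S
  have hS : S = {x ∈ Ioo (1 / 2) 1 | hopfRoot (-1) x = γ} ∪
      {x ∈ Ioo φ⁻¹ 1 | hopfRoot 1 x = γ} := by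
    ext x
    have hN : N x = hopfA x * (γ * γ) + hopfB x * γ + hopfC x := by
      simp only [N, hopfA, hopfB, hopfC]; ring
    change _ ∧ _ ∧ N x = 0 ↔ _
    rw [hN]
    exact hopf_quadratic_eq_zero_in_region_iff
  have hthr := one_eighth_lt_seven_sub_three_mul_sqrt_five_div_two
  rw [hS]
  refine ⟨fun ⟨hlo, hhi⟩ => ?_, fun ⟨hlo, hhi⟩ => ?_, fun hhi => ?_⟩
  · obtain ⟨b, hb⟩ := exists_setOf_hopfRoot_one_eq_singleton ⟨by linarith, hhi⟩
    rw [setOf_hopfRoot_neg_one_eq_empty hlo, hb, empty_union, encard_singleton]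
  · obtain ⟨a, ha⟩ := exists_setOf_hopfRoot_neg_one_eq_singleton ⟨hlo, hhi⟩
    obtain ⟨b, hb⟩ := exists_setOf_hopfRoot_one_eq_singleton ⟨hlo, by linarith⟩
    rw [encard_union_eq (disjoint_hopfRoot_fibers γ), ha, hb, encard_singleton, encard_singleton]
    rfl
  · rw [setOf_hopfRoot_neg_one_eq_empty (by linarith), setOf_hopfRoot_one_eq_empty hhi,
      union_empty]
end

section
/- Let A, δ ∈ ℝ with δ > 0 and 11A²(11 − 9δ) > 100δ², set B = δ + 1 + A², ε* = δ/44, and ω = √(11A²(11 − 9δ) − 100δ²)/11 > 0. Let J* := I₄ ⊗ M + ε*(𝟙₄ − 4I₄) ⊗ D with M = [[B−1, A²],[−B, −A²]] and D = diag(1, 10), regarded as a complex 8×8 matrix. Then the eigenvalues κ_{2,±} = (δ − 44ε* ± √((δ + 36ε*)² − 4A²(1 − 36ε*)))/2 equal the purely imaginary pair ±iω, and the nullspace of J* − iω·I₈ has complex dimension exactly 3. -/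
open Kronecker

set_option maxHeartbeats 4000000 in
/-- At the equivariant Hopf bifurcation of the coupled Brusselator network
(`δ > 0`, `11A²(11 − 9δ) > 100δ²`, `B = δ + 1 + A²`, `ε* = δ/44`,
`ω = √(11A²(11 − 9δ) − 100δ²)/11 > 0`), the eigenvalues
`κ₂,± = (δ − 44ε* ± √((δ + 36ε*)² − 4A²(1 − 36ε*)))/2` equal the purely imaginary pair
`±iω`, and the nullspace of `J* − iω·I₈` has complex dimension exactly 3. -/
theorem stmt_18 (A δ : ℝ) (hδ : 0 < δ)
    (h : 100 * δ ^ 2 < 11 * A ^ 2 * (11 - 9 * δ)) :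
    let B : ℝ := δ + 1 + A ^ 2
    let ε : ℝ := δ / 44
    let ω : ℝ := Real.sqrt (11 * A ^ 2 * (11 - 9 * δ) - 100 * δ ^ 2) / 11
    let M : Matrix (Fin 2) (Fin 2) ℂ := !![(B : ℂ) - 1, (A : ℂ) ^ 2; -(B : ℂ), -(A : ℂ) ^ 2]
    let D : Matrix (Fin 2) (Fin 2) ℂ := !![1, 0; 0, 10]
    let One4 : Matrix (Fin 4) (Fin 4) ℂ := Matrix.of fun _ _ => 1
    let J : Matrix (Fin 4 × Fin 2) (Fin 4 × Fin 2) ℂ :=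
      (1 : Matrix (Fin 4) (Fin 4) ℂ) ⊗ₖ M +
        ((ε : ℂ) • (One4 - (4 : ℂ) • (1 : Matrix (Fin 4) (Fin 4) ℂ))) ⊗ₖ D
    0 < ω ∧
    {κ : ℂ | ∃ s : ℂ,
        s ^ 2 = ((δ : ℂ) + 36 * (ε : ℂ)) ^ 2 - 4 * (A : ℂ) ^ 2 * (1 - 36 * (ε : ℂ)) ∧
        κ = ((δ : ℂ) - 44 * (ε : ℂ) + s) / 2} =
      {Complex.I * (ω : ℂ), -(Complex.I * (ω : ℂ))} ∧
    Module.finrank ℂ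
      ↥(LinearMap.ker (Matrix.toLin' (J - (Complex.I * (ω : ℂ)) •
        (1 : Matrix (Fin 4 × Fin 2) (Fin 4 × Fin 2) ℂ)))) = 3 := by
  intro B ε ω M D One4 J
  have hB : B = δ + 1 + A ^ 2 := rfl
  have hε : ε = δ / 44 := rfl
  have hωdef : ω = Real.sqrt (11 * A ^ 2 * (11 - 9 * δ) - 100 * δ ^ 2) / 11 := rfl
  have hM : M = !![(B : ℂ) - 1, (A : ℂ) ^ 2; -(B : ℂ), -(A : ℂ) ^ 2] := rfl
  have hD : D = !![1, 0; 0, 10] := rfl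
  have hOne4 : One4 = Matrix.of fun _ _ => 1 := rfl
  have hJ : J = (1 : Matrix (Fin 4) (Fin 4) ℂ) ⊗ₖ M +
      ((ε : ℂ) • (One4 - (4 : ℂ) • (1 : Matrix (Fin 4) (Fin 4) ℂ))) ⊗ₖ D := rfl
  clear_value B ε ω M D One4 J
  have hA2 : (0:ℝ) < A ^ 2 := by nlinarith [sq_nonneg A, sq_nonneg δ]
  have hP : 0 < 11 * A ^ 2 * (11 - 9 * δ) - 100 * δ ^ 2 := by linarith
  have hω : 0 < ω := by rw [hωdef]; positivity
  have hω2 : ω ^ 2 = (11 * A ^ 2 * (11 - 9 * δ) - 100 * δ ^ 2) / 121 := by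
    rw [hωdef, div_pow, Real.sq_sqrt hP.le]; norm_num
  have hA0 : (A:ℝ) ≠ 0 := fun hc => by rw [hc] at hA2; simp at hA2
  have hAc : ((A:ℂ)) ≠ 0 := by exact_mod_cast hA0
  have hAc2 : ((A:ℂ))^2 ≠ 0 := pow_ne_zero 2 hAc
  have hI : Complex.I * Complex.I = -1 := Complex.I_mul_I
  have keyR : (δ + A^2 - δ/11)^2 + ω^2 = (δ+1+A^2)*A^2 := by rw [hω2]; ring
  have keyC : ((δ:ℂ) + (A:ℂ)^2 - (δ:ℂ)/11)^2 + (ω:ℂ)^2 = ((δ:ℂ)+1+(A:ℂ)^2)*(A:ℂ)^2 := by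
    exact_mod_cast keyR
  refine ⟨hω, ?_, ?_⟩
  · -- Part 2 : set equality
    have key2 : ((δ : ℂ) + 36 * (ε : ℂ)) ^ 2 - 4 * (A : ℂ) ^ 2 * (1 - 36 * (ε : ℂ))
        = (2 * Complex.I * (ω:ℂ))^2 := by
      have hr : (δ + 36*ε)^2 - 4*A^2*(1-36*ε) = -(4*ω^2) := by
        rw [hε, hω2]; ring
      have hrc : ((δ:ℂ) + 36*(ε:ℂ))^2 - 4*(A:ℂ)^2*(1-36*(ε:ℂ)) = -(4*(ω:ℂ)^2) := by
        exact_mod_cast hr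
      rw [hrc]; linear_combination -4*(ω:ℂ)^2*hI
    have hde : (δ : ℂ) - 44 * (ε : ℂ) = 0 := by
      rw [hε]; push_cast; ring
    ext κ
    simp only [Set.mem_setOf_eq, Set.mem_insert_iff, Set.mem_singleton_iff]
    constructor
    · rintro ⟨s, hs, rfl⟩
      rw [key2] at hs
      have hfac : (s - 2 * Complex.I * (ω:ℂ)) * (s + 2 * Complex.I * (ω:ℂ)) = 0 := by
        linear_combination hs
      rcases mul_eq_zero.mp hfac with hc | hc
      · left; have hs' : s = 2 * Complex.I * (ω:ℂ) := by linear_combination hc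
        rw [hs']; linear_combination hde/2
      · right; have hs' : s = -(2 * Complex.I * (ω:ℂ)) := by linear_combination hc
        rw [hs']; linear_combination hde/2
    · rintro (rfl | rfl)
      · exact ⟨2 * Complex.I * (ω:ℂ), key2.symm, by linear_combination -hde/2⟩
      · exact ⟨-(2 * Complex.I * (ω:ℂ)), by rw [key2]; ring, by linear_combination -hde/2⟩
  · -- Part 3 : kernel dimension
    set wα : ℂ := (δ:ℂ) + (A:ℂ)^2 - (δ:ℂ)/11 - Complex.I * ω with hwα
    set w : Fin 2 → ℂ := ![(A:ℂ)^2, -wα] with hw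
    set u : Fin 3 → (Fin 4 × Fin 2 → ℂ) :=
      fun k p => (if (p.1 : ℕ) = (k : ℕ) + 1 then 1 else if (p.1 : ℕ) = 0 then -1 else 0) * w p.2 with hu
    have hker : LinearMap.ker (Matrix.toLin' (J - (Complex.I * (ω : ℂ)) •
        (1 : Matrix (Fin 4 × Fin 2) (Fin 4 × Fin 2) ℂ)))
        = Submodule.span ℂ (Set.range u) := by
      apply le_antisymm
      · -- kernel ⊆ span
        intro x hx
        rw [LinearMap.mem_ker, Matrix.toLin'_apply] at hx
        have e00 := congrFun hx (0,0)
        have e01 := congrFun hx (0,1)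
        have e10 := congrFun hx (1,0)
        have e11 := congrFun hx (1,1)
        have e20 := congrFun hx (2,0)
        have e21 := congrFun hx (2,1)
        have e30 := congrFun hx (3,0)
        have e31 := congrFun hx (3,1)
        simp only [hJ, hM, hD, hOne4, Matrix.mulVec, dotProduct,
          Fintype.sum_prod_type, Fin.sum_univ_four, Fin.sum_univ_two, Matrix.sub_apply,
          Matrix.add_apply, Matrix.smul_apply, Matrix.kroneckerMap_apply, Matrix.one_apply,
          Matrix.of_apply, Prod.mk.injEq, smul_eq_mul, Pi.zero_apply,
          Matrix.cons_val', Matrix.cons_val_zero, Matrix.cons_val_one, Matrix.head_cons,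
          Matrix.head_fin_const, Matrix.empty_val', Matrix.cons_val_fin_one]
          at e00 e01 e10 e11 e20 e21 e30 e31
        norm_num [hB, hε, Fin.ext_iff,
          show ((0:Fin 4):ℕ) = 0 from rfl, show ((1:Fin 4):ℕ) = 1 from rfl,
          show ((2:Fin 4):ℕ) = 2 from rfl, show ((3:Fin 4):ℕ) = 3 from rfl,
          show ((0:Fin 2):ℕ) = 0 from rfl, show ((1:Fin 2):ℕ) = 1 from rfl]
          at e00 e01 e10 e11 e20 e21 e30 e31
        set d : ℂ := (A:ℂ)^2 + (Complex.I*(ω:ℂ))^2 - Complex.I*(ω:ℂ)*(δ:ℂ) with hdd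
        have hd'' : d = ((A^2 - ω^2 : ℝ):ℂ) - Complex.I*((ω*δ:ℝ):ℂ) := by
          rw [hdd]; push_cast; linear_combination (ω:ℂ)^2 * hI
        have hd : d ≠ 0 := by
          rw [hd'']
          intro hcon
          have him := congrArg Complex.im hcon
          simp only [Complex.sub_im, Complex.mul_im, Complex.I_re, Complex.I_im,
            Complex.ofReal_re, Complex.ofReal_im, Complex.zero_im] at him
          nlinarith [mul_pos hω hδ]
        have h0 : d * (x (0,0) + x (1,0) + x (2,0) + x (3,0)) = 0 := by
          linear_combination (-(A:ℂ)^2 - Complex.I*(ω:ℂ)) * (e00 + e10 + e20 + e30)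
            - (A:ℂ)^2 * (e01 + e11 + e21 + e31)
        have hs0 : x (0,0) + x (1,0) + x (2,0) + x (3,0) = 0 :=
          (mul_eq_zero.mp h0).resolve_left hd
        have h1_0 : (A:ℂ)^2 * x (0,1)
            = -((δ:ℂ) + (A:ℂ)^2 - (δ:ℂ)/11 - Complex.I*(ω:ℂ)) * x (0,0) := by
          linear_combination e00 - ((δ:ℂ)/44) * hs0
        have h1_1 : (A:ℂ)^2 * x (1,1)
            = -((δ:ℂ) + (A:ℂ)^2 - (δ:ℂ)/11 - Complex.I*(ω:ℂ)) * x (1,0) := by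
          linear_combination e10 - ((δ:ℂ)/44) * hs0
        have h1_2 : (A:ℂ)^2 * x (2,1)
            = -((δ:ℂ) + (A:ℂ)^2 - (δ:ℂ)/11 - Complex.I*(ω:ℂ)) * x (2,0) := by
          linear_combination e20 - ((δ:ℂ)/44) * hs0
        have h1_3 : (A:ℂ)^2 * x (3,1)
            = -((δ:ℂ) + (A:ℂ)^2 - (δ:ℂ)/11 - Complex.I*(ω:ℂ)) * x (3,0) := by
          linear_combination e30 - ((δ:ℂ)/44) * hs0
        have hrep : x = (x (1,0) * ((A:ℂ)^2)⁻¹) • u 0 + (x (2,0) * ((A:ℂ)^2)⁻¹) • u 1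
            + (x (3,0) * ((A:ℂ)^2)⁻¹) • u 2 := by
          funext p
          obtain ⟨i, a⟩ := p
          fin_cases i <;> fin_cases a
          all_goals
            simp only [hu, hw, Pi.add_apply, Pi.smul_apply, smul_eq_mul, Fin.reduceFinMk,
              Matrix.cons_val', Matrix.cons_val_zero, Matrix.cons_val_one, Matrix.head_cons,
              show ((0:Fin 4):ℕ) = 0 from rfl, show ((1:Fin 4):ℕ) = 1 from rfl,
              show ((2:Fin 4):ℕ) = 2 from rfl, show ((3:Fin 4):ℕ) = 3 from rfl,
              show ((0:Fin 3):ℕ) = 0 from rfl, show ((1:Fin 3):ℕ) = 1 from rfl,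
              show ((2:Fin 3):ℕ) = 2 from rfl]
          all_goals try norm_num
          all_goals try field_simp
          all_goals
            first
              | linear_combination hs0
              | linear_combination -hs0
              | linear_combination h1_0 - ((δ:ℂ) + (A:ℂ)^2 - (δ:ℂ)/11 - Complex.I*(ω:ℂ)) * hs0
              | linear_combination h1_0 + ((δ:ℂ) + (A:ℂ)^2 - (δ:ℂ)/11 - Complex.I*(ω:ℂ)) * hs0
              | linear_combination -h1_0 - ((δ:ℂ) + (A:ℂ)^2 - (δ:ℂ)/11 - Complex.I*(ω:ℂ)) * hs0
              | linear_combination -h1_0 + ((δ:ℂ) + (A:ℂ)^2 - (δ:ℂ)/11 - Complex.I*(ω:ℂ)) * hs0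
              | linear_combination h1_1
              | linear_combination -h1_1
              | linear_combination h1_2
              | linear_combination -h1_2
              | linear_combination h1_3
              | linear_combination -h1_3
              | ring1
        rw [hrep]
        refine Submodule.add_mem _ (Submodule.add_mem _ ?_ ?_) ?_ <;>
          exact Submodule.smul_mem _ _ (Submodule.subset_span ⟨_, rfl⟩)
      · -- span ⊆ kernel
        rw [Submodule.span_le]
        rintro _ ⟨k, rfl⟩
        rw [SetLike.mem_coe, LinearMap.mem_ker, Matrix.toLin'_apply]
        funext p
        obtain ⟨i, a⟩ := p
        fin_cases k <;> fin_cases i <;> fin_cases a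
        all_goals
          simp only [hJ, hM, hD, hOne4, hu, hw, Matrix.mulVec, dotProduct,
            Fintype.sum_prod_type, Fin.sum_univ_four, Fin.sum_univ_two, Matrix.sub_apply,
            Matrix.add_apply, Matrix.smul_apply, Matrix.kroneckerMap_apply, Matrix.one_apply,
            Matrix.of_apply, Prod.mk.injEq, smul_eq_mul, Pi.zero_apply,
            Matrix.cons_val', Matrix.cons_val_zero, Matrix.cons_val_one, Matrix.head_cons,
            Matrix.head_fin_const, Matrix.empty_val', Matrix.cons_val_fin_one,
            show ((0:Fin 4):ℕ) = 0 from rfl, show ((1:Fin 4):ℕ) = 1 from rfl,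
            show ((2:Fin 4):ℕ) = 2 from rfl, show ((3:Fin 4):ℕ) = 3 from rfl,
            show ((0:Fin 3):ℕ) = 0 from rfl, show ((1:Fin 3):ℕ) = 1 from rfl,
            show ((2:Fin 3):ℕ) = 2 from rfl]
        all_goals
          norm_num [hB, hε, hwα, Fin.ext_iff,
            show ((0:Fin 4):ℕ) = 0 from rfl, show ((1:Fin 4):ℕ) = 1 from rfl,
            show ((2:Fin 4):ℕ) = 2 from rfl, show ((3:Fin 4):ℕ) = 3 from rfl]
        all_goals
          first
            | rfl
            | linear_combination keyC - (ω:ℂ)^2*hI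
            | linear_combination -keyC + (ω:ℂ)^2*hI
            | linear_combination keyC + (ω:ℂ)^2*hI
            | linear_combination -keyC - (ω:ℂ)^2*hI
            | ring
    rw [hker]
    have hLI : LinearIndependent ℂ u := by
      rw [Fintype.linearIndependent_iff]
      intro g hg k
      have hk := congrFun hg (k.succ, 0)
      fin_cases k <;>
        simp only [hu, hw, Fin.sum_univ_three, Pi.add_apply, Pi.smul_apply, smul_eq_mul,
          Matrix.cons_val', Matrix.cons_val_zero, Matrix.cons_val_one, Matrix.head_cons,
          Pi.zero_apply, Fin.succ] at hk <;>
        norm_num at hk <;>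
        rcases hk with hk | hk <;> first | exact hk | exact absurd hk hA0 | exact absurd hk hAc2
    rw [finrank_span_eq_card hLI]
    simp
end
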